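/- arXiv:2004.00340 — 4 statements merged into one kernel-verified Lean document; each statement's English description precedes it below -/
import Mathlib

section
/- Garsia–Rodemich–Rumsey moment estimate, pathwise form (first inequality of the paper's Lemma 4.1): There exists an absolute constant C > 0 such that for every probability space (Ω, F, P), every continuous ℝ^d-valued stochastic process Y on a compact interval [a,b] ⊂ ℝ, and all real numbers γ > 0, p ≥ max(1, γ), q > 0 with pq > 2, one has E[ sup_{t∈[a,b]} |Y_t − Y_a|^γ ] ≤ ( C · pq/(pq−2) · (b−a)^{q−2/p} )^γ · E[ ( ∫_a^b ∫_a^b |Y_s − Y_t|^p / |t−s|^{pq} ds dt )^{γ/p} ], where both sides are allowed to take the value +∞. -/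
/-!
Garsia–Rodemich–Rumsey chaining. Let `B` bound the energy `∫∫ ‖f s - f t‖^p / |t - s|^(pq)` over
`[0, T]` and call `u` good if its potential `∫ ‖f u - f t‖^p / |t - u|^(pq) dt` is at most `4B/u`.
For a good `u` and `d = r u`, Chebyshev's inequality shows that a point `v ∈ (0, d)` is again good
and satisfies `‖f u - f v‖^p ≤ 16 B u^(pq) / (u d)`, except on a set of measure at most `d / 2`.
This yields a good `v < r u` with `‖f u - f v‖ ≤ (16B/r)^(1/p) u^(q - 2/p)`, and iterating from a
good `t₀` gives a sequence decreasing to `0` whose increments form a geometric series of ratio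
`r^(q - 2/p)`. The choice `r = exp(-1/q)` keeps `r^(-1/p) = exp(1/(pq))` bounded and makes the sum
of the series `O(pq/(pq-2)) (16B)^(1/p) t₀^(q - 2/p)`. The same bound for the reflected path
controls `‖f T - f t₀‖`; a translation handles `‖f c - f a‖` for `c ∈ [a, b]`, and the moment bound
follows by raising to the power `γ` and integrating over `ω`.
-/

open MeasureTheory Set Filter Topology
open scoped ENNReal

theorem exists_mem_le_le_of_setLIntegral_div_add_lt {α : Type*} [MeasurableSpace α]
    {μ : Measure α} {s : Set α} {f g : α → ℝ≥0∞} (hf : AEMeasurable f (μ.restrict s))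
    (hg : AEMeasurable g (μ.restrict s)) {L K : ℝ≥0∞} (hL₀ : L ≠ 0) (hL : L ≠ ∞) (hK₀ : K ≠ 0)
    (hK : K ≠ ∞) (h : (∫⁻ x in s, f x ∂μ) / L + (∫⁻ x in s, g x ∂μ) / K < μ s) :
    ∃ x ∈ s, f x ≤ L ∧ g x ≤ K := by
  by_contra! hbad
  have hcover : s ⊆ {x | L ≤ f x} ∪ {x | K ≤ g x} := fun x hx ↦ by
    by_cases hfx : f x ≤ L
    · exact Or.inr (hbad x hx hfx).le
    · exact Or.inl (not_le.1 hfx).le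
  refine (h.trans_le ?_).false
  calc μ s = μ.restrict s s := (Measure.restrict_apply_self μ s).symm
    _ ≤ μ.restrict s {x | L ≤ f x} + μ.restrict s {x | K ≤ g x} :=
      (measure_mono hcover).trans (measure_union_le _ _)
    _ ≤ _ := add_le_add (meas_ge_le_lintegral_div hf hL₀ hL) (meas_ge_le_lintegral_div hg hK₀ hK)

theorem dist_le_of_forall_exists_lt_mul {β : Type*} [PseudoMetricSpace β] {f : ℝ → β}
    (hf : ContinuousWithinAt f (Ioi 0) 0) {P : ℝ → Prop} {r θ A : ℝ} (hr₀ : 0 < r) (hr₁ : r < 1)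
    (hθ : 0 < θ) (hA : 0 ≤ A)
    (hstep : ∀ u, 0 < u → P u → ∃ v, 0 < v ∧ v < r * u ∧ P v ∧ dist (f u) (f v) ≤ A * u ^ θ)
    {u₀ : ℝ} (hu₀ : 0 < u₀) (hP : P u₀) :
    dist (f u₀) (f 0) ≤ A * u₀ ^ θ / (1 - r ^ θ) := by
  choose next hnext using fun x : {u // 0 < u ∧ P u} ↦ hstep x.1 x.2.1 x.2.2
  let F : {u // 0 < u ∧ P u} → {u // 0 < u ∧ P u} :=
    fun x ↦ ⟨next x, (hnext x).1, (hnext x).2.2.1⟩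
  set u : ℕ → ℝ := fun n ↦ (F^[n] ⟨u₀, hu₀, hP⟩).1 with hu
  have hpos : ∀ n, 0 < u n := fun n ↦ (F^[n] _).2.1
  have hsucc : ∀ n, u (n + 1) = next (F^[n] ⟨u₀, hu₀, hP⟩) := fun n ↦ by
    simp only [hu, Function.iterate_succ_apply']
    rfl
  have hdecay : ∀ n, u n ≤ r ^ n * u₀ := by
    intro n
    induction n with
    | zero => simp [hu]
    | succ n ih =>
      calc u (n + 1) ≤ r * u n := by rw [hsucc]; exact (hnext _).2.1.le
        _ ≤ r * (r ^ n * u₀) := by gcongr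
        _ = r ^ (n + 1) * u₀ := by ring
  have hdist : ∀ n, dist (f (u n)) (f (u (n + 1))) ≤ A * u₀ ^ θ * (r ^ θ) ^ n := fun n ↦
    calc dist (f (u n)) (f (u (n + 1))) ≤ A * u n ^ θ := by rw [hsucc]; exact (hnext _).2.2.2
      _ ≤ A * (r ^ n * u₀) ^ θ := by gcongr; exacts [(hpos n).le, hdecay n]
      _ = A * u₀ ^ θ * (r ^ θ) ^ n := by
        rw [Real.mul_rpow (by positivity) hu₀.le, ← Real.rpow_pow_comm hr₀.le]; ring
  have hlim : Tendsto u atTop (𝓝[>] 0) := by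
    refine tendsto_nhdsWithin_iff.2 ⟨squeeze_zero (fun n ↦ (hpos n).le) hdecay ?_,
      Eventually.of_forall hpos⟩
    simpa using (tendsto_pow_atTop_nhds_zero_of_lt_one hr₀.le hr₁).mul_const u₀
  exact dist_le_of_le_geometric_of_tendsto₀ _ _ (Real.rpow_lt_one hr₀.le hr₁ hθ) hdist
    (hf.tendsto.comp hlim)

theorem inv_one_sub_exp_neg_le {y : ℝ} (hy₀ : 0 < y) (hy₁ : y ≤ 1) :
    (1 - Real.exp (-y))⁻¹ ≤ 2 / y := by
  have hexp : Real.exp (-y) * Real.exp y = 1 := by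
    rw [← Real.exp_add, neg_add_cancel, Real.exp_zero]
  have : y / 2 ≤ 1 - Real.exp (-y) := by
    nlinarith [Real.add_one_le_exp y, Real.exp_pos (-y)]
  rw [← inv_div]
  exact inv_anti₀ (by positivity) this

section GarsiaRodemichRumsey

variable {E : Type*} [NormedAddCommGroup E] {f g : ℝ → E} {p q : ℝ} {S S' : Set ℝ}

noncomputable def grrKernel (f : ℝ → E) (p q s t : ℝ) : ℝ≥0∞ :=
  ENNReal.ofReal (‖f s - f t‖ ^ p / |t - s| ^ (p * q))

noncomputable def grrPotential (f : ℝ → E) (p q : ℝ) (S : Set ℝ) (s : ℝ) : ℝ≥0∞ :=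
  ∫⁻ t in S, grrKernel f p q s t

noncomputable def grrEnergy (f : ℝ → E) (p q : ℝ) (S : Set ℝ) : ℝ≥0∞ :=
  ∫⁻ s in S, grrPotential f p q S s

theorem measurable_grrKernel (hf : Continuous f) :
    Measurable (Function.uncurry (grrKernel f p q)) := by
  have hdiff : Continuous fun x : ℝ × ℝ ↦ ‖f x.1 - f x.2‖ := by fun_prop
  have hgap : Continuous fun x : ℝ × ℝ ↦ |x.2 - x.1| := by fun_prop
  exact ((hdiff.measurable.pow_const p).div (hgap.measurable.pow_const _)).ennreal_ofReal

theorem measurable_grrPotential (hf : Continuous f) : Measurable (grrPotential f p q S) :=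
  (measurable_grrKernel hf).lintegral_prod_right'

theorem grrEnergy_mono (h : S ⊆ S') : grrEnergy f p q S ≤ grrEnergy f p q S' :=
  (lintegral_mono_set h).trans (lintegral_mono fun _ ↦ lintegral_mono_set h)

theorem grrEnergy_congr (hS : MeasurableSet S) (h : EqOn f g S) :
    grrEnergy f p q S = grrEnergy g p q S :=
  setLIntegral_congr_fun hS fun s hs ↦ setLIntegral_congr_fun hS fun t ht ↦ by
    simp only [grrKernel, h hs, h ht]

theorem grrPotential_comp {φ : ℝ → ℝ} (hφ : MeasurePreserving φ) (hφe : MeasurableEmbedding φ)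
    (hφd : ∀ s t, |φ t - φ s| = |t - s|) (S : Set ℝ) (s : ℝ) :
    grrPotential (f ∘ φ) p q (φ ⁻¹' S) s = grrPotential f p q S (φ s) := by
  rw [grrPotential, grrPotential,
    ← hφ.setLIntegral_comp_preimage_emb hφe (grrKernel f p q (φ s)) S]
  simp only [grrKernel, Function.comp_apply, hφd]

theorem grrEnergy_comp {φ : ℝ → ℝ} (hφ : MeasurePreserving φ) (hφe : MeasurableEmbedding φ)
    (hφd : ∀ s t, |φ t - φ s| = |t - s|) (S : Set ℝ) :
    grrEnergy (f ∘ φ) p q (φ ⁻¹' S) = grrEnergy f p q S := by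
  rw [grrEnergy, grrEnergy, ← hφ.setLIntegral_comp_preimage_emb hφe (grrPotential f p q S) S]
  simp only [grrPotential_comp hφ hφe hφd]

theorem grrPotential_comp_const_sub (T s : ℝ) :
    grrPotential (f ∘ (T - ·)) p q (Icc 0 T) s = grrPotential f p q (Icc 0 T) (T - s) := by
  have h := grrPotential_comp (f := f) (p := p) (q := q)
    (Measure.measurePreserving_sub_left volume T)
    (measurableEmbedding_subLeft T) (fun s t ↦ by rw [sub_sub_sub_cancel_left, abs_sub_comm])
    (Icc 0 T) s
  rwa [preimage_const_sub_Icc, sub_zero, sub_self] at h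

theorem grrEnergy_comp_const_sub (T : ℝ) :
    grrEnergy (f ∘ (T - ·)) p q (Icc 0 T) = grrEnergy f p q (Icc 0 T) := by
  have h := grrEnergy_comp (f := f) (p := p) (q := q)
    (Measure.measurePreserving_sub_left volume T)
    (measurableEmbedding_subLeft T) (fun s t ↦ by rw [sub_sub_sub_cancel_left, abs_sub_comm])
    (Icc 0 T)
  rwa [preimage_const_sub_Icc, sub_zero, sub_self] at h

theorem grrEnergy_comp_add_const (a c : ℝ) :
    grrEnergy (f ∘ (· + a)) p q (Icc 0 (c - a)) = grrEnergy f p q (Icc a c) := by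
  have h := grrEnergy_comp (f := f) (p := p) (q := q) (measurePreserving_add_right volume a)
    (measurableEmbedding_addRight a) (fun s t ↦ by rw [add_sub_add_right_eq_sub]) (Icc a c)
  rwa [preimage_add_const_Icc, sub_self] at h

theorem norm_sub_rpow_le_of_grrKernel_le {u v L : ℝ} (hpq : 0 ≤ p * q) (hv : 0 < v)
    (hvu : v < u) (hL : 0 ≤ L) (hk : grrKernel f p q u v ≤ ENNReal.ofReal L) :
    ‖f u - f v‖ ^ p ≤ L * u ^ (p * q) := by
  have hgap : |v - u| ≤ u := by rw [abs_sub_comm, abs_of_pos (by linarith)]; linarith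
  have hk' := (ENNReal.ofReal_le_ofReal_iff hL).1 hk
  rw [div_le_iff₀ (Real.rpow_pos_of_pos (abs_pos.2 (sub_ne_zero.2 hvu.ne)) _)] at hk'
  exact hk'.trans (by gcongr)

theorem exists_grr_step {B T r u : ℝ} (hf : Continuous f) (hp : 0 < p) (hq : 0 ≤ q)
    (hB : 0 < B) (hE : grrEnergy f p q (Icc 0 T) ≤ ENNReal.ofReal B) (hr₀ : 0 < r) (hr₁ : r < 1)
    (hu : 0 < u) (huT : u ≤ T)
    (hPu : grrPotential f p q (Icc 0 T) u ≤ ENNReal.ofReal (4 * B / u)) :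
    ∃ v, 0 < v ∧ v < r * u ∧
      (v ≤ T ∧ grrPotential f p q (Icc 0 T) v ≤ ENNReal.ofReal (4 * B / v)) ∧
      dist (f u) (f v) ≤ (16 * B / r) ^ (1 / p) * u ^ (q - 2 / p) := by
  set d := r * u with hd_def
  have hd : 0 < d := mul_pos hr₀ hu
  have hdu : d < u := by nlinarith
  have hsub : Ioo 0 d ⊆ Icc 0 T := Ioo_subset_Icc_self.trans (Icc_subset_Icc_right (by linarith))
  have hL : 0 < 4 * B / d := by positivity
  have hK : 0 < 16 * B / (u * d) := by positivity
  obtain ⟨v, ⟨hv₀, hvd⟩, hPv, hkv⟩ := exists_mem_le_le_of_setLIntegral_div_add_lt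
    (measurable_grrPotential (p := p) (q := q) (S := Icc 0 T) hf).aemeasurable
    ((measurable_grrKernel (p := p) (q := q) hf).comp measurable_prodMk_left).aemeasurable
    (ENNReal.ofReal_pos.2 hL).ne' ENNReal.ofReal_ne_top (ENNReal.ofReal_pos.2 hK).ne'
    ENNReal.ofReal_ne_top (μ := volume) (s := Ioo 0 d) <| calc
      (∫⁻ x in Ioo 0 d, grrPotential f p q (Icc 0 T) x) / ENNReal.ofReal (4 * B / d) +
          (∫⁻ x in Ioo 0 d, grrKernel f p q u x) / ENNReal.ofReal (16 * B / (u * d))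
        ≤ ENNReal.ofReal B / ENNReal.ofReal (4 * B / d) +
          ENNReal.ofReal (4 * B / u) / ENNReal.ofReal (16 * B / (u * d)) := by
        gcongr
        exacts [(lintegral_mono_set hsub).trans hE, (lintegral_mono_set hsub).trans hPu]
      _ = ENNReal.ofReal (d / 4) + ENNReal.ofReal (d / 4) := by
        rw [← ENNReal.ofReal_div_of_pos hL, ← ENNReal.ofReal_div_of_pos hK]
        congr 2 <;> field_simp; norm_num
      _ < volume (Ioo 0 d) := by
        rw [← ENNReal.ofReal_add (by positivity) (by positivity), Real.volume_Ioo,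
          ENNReal.ofReal_lt_ofReal_iff (by linarith)]
        linarith
  refine ⟨v, hv₀, hvd, ⟨by linarith, hPv.trans (ENNReal.ofReal_le_ofReal (by gcongr))⟩, ?_⟩
  have hpow := norm_sub_rpow_le_of_grrKernel_le (by positivity) hv₀ (hvd.trans hdu) hK.le hkv
  rw [dist_eq_norm, ← Real.rpow_le_rpow_iff (norm_nonneg _) (by positivity) hp]
  refine hpow.trans_eq ?_
  rw [Real.mul_rpow (by positivity) (by positivity), ← Real.rpow_mul (by positivity),
    ← Real.rpow_mul hu.le, one_div_mul_cancel hp.ne', Real.rpow_one,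
    show (q - 2 / p) * p = p * q - 2 by field_simp, Real.rpow_sub hu, Real.rpow_two, hd_def]
  field_simp

theorem dist_le_of_grrPotential_le {B T t₀ : ℝ} (hf : Continuous f) (hp : 1 ≤ p)
    (hpq : 2 < p * q) (hB : 0 < B) (hE : grrEnergy f p q (Icc 0 T) ≤ ENNReal.ofReal B)
    (ht₀ : 0 < t₀) (ht₀T : t₀ ≤ T)
    (hP : grrPotential f p q (Icc 0 T) t₀ ≤ ENNReal.ofReal (4 * B / t₀)) :
    dist (f t₀) (f 0) ≤ 96 * (p * q) / (p * q - 2) * t₀ ^ (q - 2 / p) * B ^ (1 / p) := by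
  have hp₀ : 0 < p := by linarith
  have hq : 0 < q := pos_of_mul_pos_right (by linarith) hp₀.le
  have hθ : 0 < q - 2 / p := by rw [sub_pos, div_lt_iff₀ hp₀]; linarith
  set r := Real.exp (-(1 / q)) with hr
  have hr₀ : 0 < r := Real.exp_pos _
  have hr₁ : r < 1 := Real.exp_lt_one_iff.2 (by simp [hq])
  have hchain := dist_le_of_forall_exists_lt_mul hf.continuousWithinAt hr₀ hr₁ hθ
    (by positivity)
    (P := fun u ↦ u ≤ T ∧ grrPotential f p q (Icc 0 T) u ≤ ENNReal.ofReal (4 * B / u))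
    (fun u hu hPu ↦ exists_grr_step hf hp₀ hq.le hB hE hr₀ hr₁ hu hPu.1 hPu.2) ht₀ ⟨ht₀T, hP⟩
  have hA : (16 * B / r) ^ (1 / p) ≤ 48 * B ^ (1 / p) := by
    have h16 : (16 : ℝ) ^ (1 / p) ≤ 16 :=
      Real.rpow_le_self_of_one_le (by norm_num) ((div_le_one hp₀).2 hp)
    have hexp : Real.exp (1 / q) ^ (1 / p) ≤ 3 := by
      rw [← Real.exp_mul]
      calc Real.exp (1 / q * (1 / p)) ≤ Real.exp 1 := Real.exp_le_exp.2 (by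
            rw [div_mul_div_comm, one_mul, mul_comm, div_le_one (by positivity)]; linarith)
        _ ≤ 3 := by linarith [Real.exp_one_lt_d9]
    rw [hr, Real.exp_neg, div_inv_eq_mul, mul_right_comm, Real.mul_rpow (by positivity) hB.le,
      Real.mul_rpow (by norm_num) (by positivity)]
    gcongr
    linarith [mul_le_mul h16 hexp (by positivity) (by norm_num)]
  have hgeom : (1 - r ^ (q - 2 / p))⁻¹ ≤ 2 * (p * q) / (p * q - 2) := by
    have hy : (q - 2 / p) / q = (p * q - 2) / (p * q) := by field_simp
    rw [hr, ← Real.exp_mul, neg_mul, one_div_mul_eq_div, hy]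
    convert inv_one_sub_exp_neg_le (y := (p * q - 2) / (p * q)) (by positivity)
      ((div_le_one (by positivity)).2 (by linarith)) using 1
    field_simp
  calc dist (f t₀) (f 0)
      ≤ (16 * B / r) ^ (1 / p) * t₀ ^ (q - 2 / p) * (1 - r ^ (q - 2 / p))⁻¹ := by
        rw [← div_eq_mul_inv]; exact hchain
    _ ≤ 48 * B ^ (1 / p) * t₀ ^ (q - 2 / p) * (2 * (p * q) / (p * q - 2)) := by
        have : 0 ≤ (1 - r ^ (q - 2 / p))⁻¹ :=
          inv_nonneg.2 (sub_nonneg.2 (Real.rpow_le_one hr₀.le hr₁.le hθ.le))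
        gcongr
    _ = 96 * (p * q) / (p * q - 2) * t₀ ^ (q - 2 / p) * B ^ (1 / p) := by ring

theorem dist_le_of_grrEnergy_le_Icc_zero {B T : ℝ} (hf : Continuous f) (hp : 1 ≤ p)
    (hpq : 2 < p * q) (hB : 0 < B) (hT : 0 < T)
    (hE : grrEnergy f p q (Icc 0 T) ≤ ENNReal.ofReal B) :
    dist (f T) (f 0) ≤ 192 * (p * q) / (p * q - 2) * T ^ (q - 2 / p) * B ^ (1 / p) := by
  obtain ⟨t₀, ⟨ht₀, ht₀T⟩, hPt₀⟩ := exists_le_setLAverage (μ := volume) (s := Ioo 0 T)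
    (by simp [hT]) (by simp)
    (measurable_grrPotential (p := p) (q := q) (S := Icc 0 T) hf).aemeasurable
  have hP : grrPotential f p q (Icc 0 T) t₀ ≤ ENNReal.ofReal (B / T) := by
    refine hPt₀.trans ?_
    rw [setLAverage_eq, Real.volume_Ioo, sub_zero, ENNReal.ofReal_div_of_pos hT]
    gcongr
    exact (lintegral_mono_set Ioo_subset_Icc_self).trans hE
  have hBT : ∀ t ∈ Ioo 0 T, ENNReal.ofReal (B / T) ≤ ENNReal.ofReal (4 * B / t) := fun t ht ↦
    ENNReal.ofReal_le_ofReal <| by rw [div_le_div_iff₀ hT ht.1]; nlinarith [ht.2]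
  have hleft := dist_le_of_grrPotential_le hf hp hpq hB hE ht₀ ht₀T.le
    (hP.trans (hBT _ ⟨ht₀, ht₀T⟩))
  have hright := dist_le_of_grrPotential_le (hf.comp (continuous_sub_left T)) hp hpq hB
    ((grrEnergy_comp_const_sub T).trans_le hE) (sub_pos.2 ht₀T) (by linarith) <| by
      rw [grrPotential_comp_const_sub, sub_sub_cancel]
      exact hP.trans (hBT _ ⟨sub_pos.2 ht₀T, by linarith⟩)
  simp only [Function.comp_apply, sub_sub_cancel, sub_zero] at hright
  have hθ : 0 ≤ q - 2 / p := by rw [sub_nonneg, div_le_iff₀ (by linarith)]; linarith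
  have hTt₀ : (T - t₀) ^ (q - 2 / p) ≤ T ^ (q - 2 / p) := by gcongr; linarith
  have ht₀T' : t₀ ^ (q - 2 / p) ≤ T ^ (q - 2 / p) := by gcongr
  calc dist (f T) (f 0) ≤ dist (f t₀) (f T) + dist (f t₀) (f 0) := dist_triangle_left _ _ _
    _ ≤ 96 * (p * q) / (p * q - 2) * T ^ (q - 2 / p) * B ^ (1 / p) +
        96 * (p * q) / (p * q - 2) * T ^ (q - 2 / p) * B ^ (1 / p) :=
      add_le_add (hright.trans (by gcongr)) (hleft.trans (by gcongr))
    _ = 192 * (p * q) / (p * q - 2) * T ^ (q - 2 / p) * B ^ (1 / p) := by ring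

theorem dist_le_of_grrEnergy_le {a b c B : ℝ} (hf : ContinuousOn f (Icc a b)) (hp : 1 ≤ p)
    (hpq : 2 < p * q) (hB : 0 < B) (hE : grrEnergy f p q (Icc a b) ≤ ENNReal.ofReal B)
    (hc : c ∈ Icc a b) :
    dist (f c) (f a) ≤ 192 * (p * q) / (p * q - 2) * (b - a) ^ (q - 2 / p) * B ^ (1 / p) := by
  have hab : a ≤ b := hc.1.trans hc.2
  have hθ : 0 ≤ q - 2 / p := by
    rw [sub_nonneg, div_le_iff₀ (by linarith)]; linarith
  have hK : 0 ≤ 192 * (p * q) / (p * q - 2) := div_nonneg (by nlinarith) (by linarith)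
  rcases hc.1.eq_or_lt with rfl | hac
  · rw [dist_self]
    exact mul_nonneg (mul_nonneg hK (Real.rpow_nonneg (sub_nonneg.2 hab) _)) (by positivity)
  set F := IccExtend hab ((Icc a b).domRestrict f)
  have hFf : EqOn F f (Icc a b) := fun x hx ↦ IccExtend_of_mem hab _ hx
  have hFc : Continuous F := hf.domRestrict.Icc_extend'
  have hEg : grrEnergy (F ∘ (· + a)) p q (Icc 0 (c - a)) ≤ ENNReal.ofReal B :=
    calc grrEnergy (F ∘ (· + a)) p q (Icc 0 (c - a)) = grrEnergy F p q (Icc a c) :=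
          grrEnergy_comp_add_const a c
      _ ≤ grrEnergy F p q (Icc a b) := grrEnergy_mono (Icc_subset_Icc_right hc.2)
      _ = grrEnergy f p q (Icc a b) := grrEnergy_congr measurableSet_Icc hFf
      _ ≤ ENNReal.ofReal B := hE
  have h := dist_le_of_grrEnergy_le_Icc_zero (hFc.comp (continuous_add_const a)) hp hpq hB
    (sub_pos.2 hac) hEg
  simp only [Function.comp_apply, sub_add_cancel, zero_add, hFf hc, hFf (left_mem_Icc.2 hab)] at h
  exact h.trans (by gcongr; linarith [hc.2])

theorem ofReal_norm_sub_rpow_le {a b c γ : ℝ} (hf : ContinuousOn f (Icc a b)) (hγ : 0 < γ)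
    (hp : 1 ≤ p) (hpq : 2 < p * q) (hc : c ∈ Icc a b) :
    ENNReal.ofReal (‖f c - f a‖ ^ γ) ≤
      ENNReal.ofReal ((192 * (p * q) / (p * q - 2) * (b - a) ^ (q - 2 / p)) ^ γ) *
        grrEnergy f p q (Icc a b) ^ (γ / p) := by
  obtain rfl | hab := (hc.1.trans hc.2).eq_or_lt
  · obtain rfl : c = a := le_antisymm hc.2 hc.1
    simp [Real.zero_rpow hγ.ne']
  set K := 192 * (p * q) / (p * q - 2) * (b - a) ^ (q - 2 / p)
  have hK : 0 < K := mul_pos (div_pos (by nlinarith) (by linarith))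
    (Real.rpow_pos_of_pos (sub_pos.2 hab) _)
  rcases eq_top_or_lt_top (grrEnergy f p q (Icc a b)) with hE | hE
  · rw [hE, ENNReal.top_rpow_of_pos (by positivity),
      ENNReal.mul_top (ENNReal.ofReal_pos.2 (by positivity)).ne']
    exact le_top
  set B₀ := (grrEnergy f p q (Icc a b)).toReal
  -- The chaining bound needs a positive energy bound `B`, so let `B` decrease to `B₀`.
  have hnorm : ‖f c - f a‖ ≤ K * B₀ ^ (1 / p) := by
    rw [← dist_eq_norm]
    refine ge_of_tendsto (x := 𝓝[>] B₀) (((continuous_const.mul (Real.continuous_rpow_const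
      (by positivity))).tendsto B₀).mono_left nhdsWithin_le_nhds)
      (eventually_nhdsWithin_of_forall fun B (hB : B₀ < B) ↦ ?_)
    exact dist_le_of_grrEnergy_le hf hp hpq (ENNReal.toReal_nonneg.trans_lt hB)
      ((ENNReal.le_ofReal_iff_toReal_le hE.ne (ENNReal.toReal_nonneg.trans hB.le)).2 hB.le) hc
  rw [← ENNReal.ofReal_toReal hE.ne, ENNReal.ofReal_rpow_of_nonneg ENNReal.toReal_nonneg
    (by positivity), ← ENNReal.ofReal_mul (by positivity)]
  refine ENNReal.ofReal_le_ofReal ((Real.rpow_le_rpow (norm_nonneg _) hnorm hγ.le).trans_eq ?_)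
  rw [Real.mul_rpow hK.le (by positivity), ← Real.rpow_mul ENNReal.toReal_nonneg,
    one_div_mul_eq_div]

end GarsiaRodemichRumsey

/-- Garsia–Rodemich–Rumsey moment estimate, pathwise form (first inequality of
Lemma 4.1 of the paper): there is an absolute constant `C > 0` such that for every
probability space, every continuous `ℝ^d`-valued process `Y` on `[a,b]` and all
`γ > 0`, `p ≥ max 1 γ`, `q > 0` with `p*q > 2`,
`E[sup_{t∈[a,b]} |Y_t - Y_a|^γ]
  ≤ (C·pq/(pq-2)·(b-a)^{q-2/p})^γ · E[(∫_a^b ∫_a^b |Y_s - Y_t|^p / |t-s|^{pq} ds dt)^{γ/p}]`. -/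
theorem grr_pathwise :
    ∃ C : ℝ, 0 < C ∧
      ∀ (d : ℕ) (Ω : Type) [MeasureSpace Ω], IsProbabilityMeasure (volume : Measure Ω) →
      ∀ (a b : ℝ), a ≤ b →
      ∀ (Y : Ω → ℝ → EuclideanSpace ℝ (Fin d)),
        (∀ ω, ContinuousOn (Y ω) (Icc a b)) →
        (∀ t, Measurable fun ω => Y ω t) →
        ∀ (γ p q : ℝ), 0 < γ → max 1 γ ≤ p → 0 < q → 2 < p * q →
          (∫⁻ ω, ⨆ t ∈ Icc a b, ENNReal.ofReal (‖Y ω t - Y ω a‖ ^ γ)) ≤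
            ENNReal.ofReal ((C * (p * q) / (p * q - 2) * (b - a) ^ (q - 2 / p)) ^ γ) *
              ∫⁻ ω, (∫⁻ s in Icc a b, ∫⁻ t in Icc a b,
                  ENNReal.ofReal (‖Y ω s - Y ω t‖ ^ p / |t - s| ^ (p * q))) ^ (γ / p) := by
  refine ⟨192, by norm_num, fun d Ω _ _ a b _ Y hY _ γ p q hγ hp _ hpq ↦ ?_⟩
  calc (∫⁻ ω, ⨆ t ∈ Icc a b, ENNReal.ofReal (‖Y ω t - Y ω a‖ ^ γ))
      ≤ ∫⁻ ω, ENNReal.ofReal ((192 * (p * q) / (p * q - 2) * (b - a) ^ (q - 2 / p)) ^ γ) *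
          grrEnergy (Y ω) p q (Icc a b) ^ (γ / p) :=
        lintegral_mono fun ω ↦ iSup₂_le fun _ ht ↦
          ofReal_norm_sub_rpow_le (hY ω) hγ (le_of_max_le_left hp) hpq ht
    _ = _ := lintegral_const_mul' _ _ ENNReal.ofReal_ne_top
end

section
/- Condition (A3) for the fractional drift kernel (part of the paper's Example 2.2): For every H > 0 and T > 0 there exists a constant C > 0, depending only on H and T, such that for every partition π of [0,T] with left-endpoint map η_π, every t ∈ [0,T] and every δ ∈ (0, min(t/2, T−t)), one has ∫_0^t [ |(t+δ−s)^{H−1} − (t−s)^{H−1}| + |(t+δ−η_π(s))^{H−1} − (t−η_π(s))^{H−1}| ] ds ≤ C δ^{min(H,1)}. -/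
open MeasureTheory Set

/-- A partition `0 = t_0 < t_1 < ⋯ < t_n = T` of the interval `[0,T]`. -/
structure TimePartition (T : ℝ) where
  n : ℕ
  t : ℕ → ℝ
  npos : 0 < n
  zero : t 0 = 0
  last : t n = T
  lt : ∀ k, k < n → t k < t (k + 1)

/-- `η` is the left-endpoint map of the partition `π`: `η s = t_k` for `s ∈ [t_k, t_{k+1})`. -/
def IsLeftEndpointMap {T : ℝ} (π : TimePartition T) (η : ℝ → ℝ) : Prop :=
  ∀ s : ℝ, ∀ k, k < π.n → π.t k ≤ s → s < π.t (k + 1) → η s = π.t k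

open scoped Interval

/-! With `p = H - 1`, both summands are increments
`|(x + δ)^p - x^p| = |p| ∫_0^δ (x + w)^(p-1) dw`, at `x = t - s` and at
`x = t - η s ∈ [t - s, t]`. For `H ≤ 2` the increment is antitone in `x`, so the `η`-term is
dominated by the `s`-term, whose integral is `(t^H + δ^H - (t + δ)^H) / H ≤ δ^H / H` when
`H ≤ 1`, and at most `δ t^(H-1)` when `1 < H ≤ 2` (bound the increment by `p δ x^(p-1)`).
For `H > 2` the integrand `(x + w)^(p-1)` is at most `T^(H-2)` because `x + δ ≤ T`, so both
terms are `O(δ)` pointwise. -/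

section RpowIncrement

variable {p x δ : ℝ}

theorem intervalIntegrable_add_rpow (hx : 0 < x) (hδ : 0 ≤ δ) (q : ℝ) :
    IntervalIntegrable (fun w => (x + w) ^ q) volume 0 δ := by
  refine ContinuousOn.intervalIntegrable (ContinuousOn.rpow_const (by fun_prop) fun w hw => ?_)
  rw [uIcc_of_le hδ] at hw
  exact Or.inl (by linarith [hw.1])

theorem rpow_add_sub_rpow_eq_mul_integral (hx : 0 < x) (hδ : 0 ≤ δ) :
    (x + δ) ^ p - x ^ p = p * ∫ w in (0)..δ, (x + w) ^ (p - 1) := by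
  rcases eq_or_ne p 0 with rfl | hp
  · simp
  have hx0 : (0 : ℝ) ∉ [[x + 0, x + δ]] := by
    rw [uIcc_of_le (by linarith)]
    exact fun h => by linarith [h.1]
  rw [intervalIntegral.integral_comp_add_left (fun w => w ^ (p - 1)) x,
    integral_rpow (Or.inr ⟨by contrapose! hp; linarith, hx0⟩), sub_add_cancel, add_zero,
    mul_div_cancel₀ _ hp]

theorem abs_rpow_add_sub_rpow_eq_mul_integral (hx : 0 < x) (hδ : 0 ≤ δ) :
    |(x + δ) ^ p - x ^ p| = |p| * ∫ w in (0)..δ, (x + w) ^ (p - 1) := by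
  rw [rpow_add_sub_rpow_eq_mul_integral hx hδ, abs_mul, abs_of_nonneg
    (intervalIntegral.integral_nonneg hδ fun w hw => Real.rpow_nonneg (by linarith [hw.1]) _)]

theorem abs_rpow_add_sub_rpow_le (hx : 0 < x) (hδ : 0 ≤ δ) {c : ℝ}
    (hc : ∀ w ∈ Icc 0 δ, (x + w) ^ (p - 1) ≤ c) :
    |(x + δ) ^ p - x ^ p| ≤ |p| * (δ * c) := by
  rw [abs_rpow_add_sub_rpow_eq_mul_integral hx hδ]
  gcongr
  calc ∫ w in (0)..δ, (x + w) ^ (p - 1)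
      ≤ ∫ _ in (0)..δ, c :=
        intervalIntegral.integral_mono_on hδ (intervalIntegrable_add_rpow hx hδ _)
          intervalIntegrable_const hc
    _ = δ * c := by simp

theorem abs_rpow_add_sub_rpow_le_of_le_one (hp : p ≤ 1) (hx : 0 < x) (hδ : 0 ≤ δ) :
    |(x + δ) ^ p - x ^ p| ≤ |p| * (δ * x ^ (p - 1)) :=
  abs_rpow_add_sub_rpow_le hx hδ fun _ hw =>
    Real.rpow_le_rpow_of_nonpos hx (by linarith [hw.1]) (by linarith)

theorem antitoneOn_abs_rpow_add_sub_rpow (hp : p ≤ 1) (hδ : 0 ≤ δ) :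
    AntitoneOn (fun x => |(x + δ) ^ p - x ^ p|) (Ioi 0) := by
  intro x hx y hy hxy
  simp only [abs_rpow_add_sub_rpow_eq_mul_integral hx hδ,
    abs_rpow_add_sub_rpow_eq_mul_integral (show 0 < y from hy) hδ]
  gcongr
  exact intervalIntegral.integral_mono_on hδ (intervalIntegrable_add_rpow hy hδ _)
    (intervalIntegrable_add_rpow hx hδ _) fun w hw =>
      Real.rpow_le_rpow_of_nonpos (by linarith [hw.1, mem_Ioi.1 hx]) (by linarith) (by linarith)

end RpowIncrement

namespace TimePartition

variable {T : ℝ} (π : TimePartition T)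

theorem t_nonneg {k : ℕ} (hk : k ≤ π.n) : 0 ≤ π.t k := by
  induction k with
  | zero => rw [π.zero]
  | succ k ih => linarith [ih (by omega), π.lt k (by omega)]

theorem exists_mem_Ico {s : ℝ} (hs : 0 ≤ s) (hsT : s < T) :
    ∃ k < π.n, s ∈ Ico (π.t k) (π.t (k + 1)) := by
  set k := Nat.findGreatest (fun k => π.t k ≤ s) π.n
  have hk : π.t k ≤ s := Nat.findGreatest_spec (P := fun k => π.t k ≤ s) (Nat.zero_le _)
    (by rw [π.zero]; exact hs)
  have hkn : k < π.n := by
    refine (show k ≤ π.n from Nat.findGreatest_le π.n).lt_of_ne fun h => ?_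
    rw [h, π.last] at hk
    linarith
  exact ⟨k, hkn, hk, not_le.1 (Nat.findGreatest_is_greatest (Nat.lt_succ_self k) hkn)⟩

end TimePartition

theorem IsLeftEndpointMap.mem_Icc {T : ℝ} {π : TimePartition T} {η : ℝ → ℝ}
    (hη : IsLeftEndpointMap π η) {s : ℝ} (hs : 0 ≤ s) (hsT : s < T) : η s ∈ Icc 0 s := by
  obtain ⟨k, hkn, hks, hsk⟩ := π.exists_mem_Ico hs hsT
  rw [hη s k hkn hks hsk]
  exact ⟨π.t_nonneg hkn.le, hks⟩

theorem setLIntegral_ofReal_le_of_le_integral {α : Type*} [MeasurableSpace α] {μ : Measure α}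
    {s : Set α} (hs : MeasurableSet s) {f g : α → ℝ} {B : ℝ} (hf : ∀ x ∈ s, 0 ≤ f x)
    (hfg : ∀ x ∈ s, f x ≤ g x) (hg : IntegrableOn g s μ) (hB : ∫ x in s, g x ∂μ ≤ B) :
    ∫⁻ x in s, ENNReal.ofReal (f x) ∂μ ≤ ENNReal.ofReal B :=
  calc ∫⁻ x in s, ENNReal.ofReal (f x) ∂μ
      ≤ ∫⁻ x in s, ENNReal.ofReal (g x) ∂μ :=
        setLIntegral_mono' hs fun x hx => ENNReal.ofReal_le_ofReal (hfg x hx)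
    _ = ENNReal.ofReal (∫ x in s, g x ∂μ) :=
        (ofReal_integral_eq_lintegral_ofReal hg ((ae_restrict_iff' hs).2
          (ae_of_all _ fun x hx => (hf x hx).trans (hfg x hx)))).symm
    _ ≤ ENNReal.ofReal B := ENNReal.ofReal_le_ofReal hB

section SubRpow

variable {p c t : ℝ}

theorem integrableOn_sub_rpow (hp : -1 < p) (ht : 0 ≤ t) :
    IntegrableOn (fun s => (c - s) ^ p) (Ioo 0 t) := by
  rw [← intervalIntegrable_iff_integrableOn_Ioo_of_le ht]
  simpa using
    (intervalIntegral.intervalIntegrable_rpow' (a := c) (b := c - t) hp).comp_sub_left c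

theorem integral_sub_rpow (hp : -1 < p) (ht : 0 ≤ t) :
    ∫ s in Ioo 0 t, (c - s) ^ p = (c ^ (p + 1) - (c - t) ^ (p + 1)) / (p + 1) := by
  rw [← integral_Ioc_eq_integral_Ioo, ← intervalIntegral.integral_of_le ht,
    intervalIntegral.integral_comp_sub_left (fun u => u ^ p) c, integral_rpow (Or.inl hp),
    sub_zero]

end SubRpow

noncomputable def driftKernelIncrement (H t δ u : ℝ) : ℝ :=
  |(t + δ - u) ^ (H - 1) - (t - u) ^ (H - 1)|

section DriftKernel

variable {H T t δ u v : ℝ} {π : TimePartition T} {η : ℝ → ℝ}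

theorem driftKernelIncrement_eq (H t δ u : ℝ) :
    driftKernelIncrement H t δ u = |(t - u + δ) ^ (H - 1) - (t - u) ^ (H - 1)| := by
  rw [driftKernelIncrement, sub_add_eq_add_sub]

theorem driftKernelIncrement_le_of_le (hH : H ≤ 2) (hδ : 0 ≤ δ) (huv : u ≤ v)
    (hvt : v < t) :
    driftKernelIncrement H t δ u ≤ driftKernelIncrement H t δ v := by
  simp only [driftKernelIncrement_eq]
  exact antitoneOn_abs_rpow_add_sub_rpow (by linarith) hδ (mem_Ioi.2 (by linarith))
    (mem_Ioi.2 (by linarith)) (by linarith)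

theorem driftKernelIncrement_le_of_le_two (hH1 : 1 ≤ H) (hH2 : H ≤ 2) (hδ : 0 ≤ δ)
    (hut : u < t) :
    driftKernelIncrement H t δ u ≤ (H - 1) * (δ * (t - u) ^ (H - 2)) := by
  have h := abs_rpow_add_sub_rpow_le_of_le_one (p := H - 1) (by linarith) (sub_pos.2 hut) hδ
  rwa [abs_of_nonneg (sub_nonneg.2 hH1), show H - 1 - 1 = H - 2 by ring,
    ← driftKernelIncrement_eq] at h

theorem driftKernelIncrement_le_of_two_le (hH : 2 ≤ H) (hδ : 0 ≤ δ) (hu : 0 ≤ u)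
    (hut : u < t) (htT : t + δ ≤ T) :
    driftKernelIncrement H t δ u ≤ (H - 1) * (δ * T ^ (H - 2)) := by
  have h := abs_rpow_add_sub_rpow_le (p := H - 1) (c := T ^ (H - 1 - 1)) (sub_pos.2 hut) hδ
    fun w hw => Real.rpow_le_rpow (by linarith [hw.1]) (by linarith [hw.2]) (by linarith)
  rwa [abs_of_nonneg (show 0 ≤ H - 1 by linarith), show H - 1 - 1 = H - 2 by ring,
    ← driftKernelIncrement_eq] at h

theorem driftKernelIncrement_add_le_two_mul (hH : H ≤ 2) (hη : IsLeftEndpointMap π η)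
    (htT : t ≤ T) (hδ : 0 ≤ δ) {s : ℝ} (hs : s ∈ Ioo 0 t) :
    driftKernelIncrement H t δ s + driftKernelIncrement H t δ (η s) ≤
      2 * driftKernelIncrement H t δ s := by
  have hηs := hη.mem_Icc hs.1.le (hs.2.trans_le htT)
  linarith [driftKernelIncrement_le_of_le hH hδ hηs.2 hs.2]

theorem lintegral_driftKernelIncrement_le_of_le_one (hH : 0 < H) (hH1 : H ≤ 1)
    (hη : IsLeftEndpointMap π η) (ht : 0 ≤ t) (htT : t ≤ T) (hδ : 0 ≤ δ) :
    ∫⁻ s in Ioo 0 t,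
        ENNReal.ofReal (driftKernelIncrement H t δ s + driftKernelIncrement H t δ (η s)) ≤
      ENNReal.ofReal (2 / H * δ ^ H) := by
  have hint : ∀ c, IntegrableOn (fun s => (c - s) ^ (H - 1)) (Ioo 0 t) := fun _ =>
    integrableOn_sub_rpow (by linarith) ht
  refine setLIntegral_ofReal_le_of_le_integral measurableSet_Ioo
    (g := fun s => 2 * ((t - s) ^ (H - 1) - (t + δ - s) ^ (H - 1)))
    (fun s _ => add_nonneg (abs_nonneg _) (abs_nonneg _)) (fun s hs => ?_)
    (((hint t).sub (hint (t + δ))).const_mul 2) ?_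
  · refine (driftKernelIncrement_add_le_two_mul (by linarith) hη htT hδ hs).trans_eq ?_
    rw [driftKernelIncrement, abs_sub_comm, abs_of_nonneg (sub_nonneg.2
      (Real.rpow_le_rpow_of_nonpos (sub_pos.2 hs.2) (by linarith) (by linarith)))]
  · have hmono : t ^ H ≤ (t + δ) ^ H := Real.rpow_le_rpow ht (by linarith) hH.le
    rw [integral_const_mul, integral_sub (hint t) (hint (t + δ)),
      integral_sub_rpow (by linarith) ht, integral_sub_rpow (by linarith) ht, sub_add_cancel,
      sub_self, add_sub_cancel_left, Real.zero_rpow hH.ne']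
    calc 2 * ((t ^ H - 0) / H - ((t + δ) ^ H - δ ^ H) / H)
        = 2 / H * (δ ^ H - ((t + δ) ^ H - t ^ H)) := by ring
      _ ≤ 2 / H * δ ^ H := mul_le_mul_of_nonneg_left (by linarith) (by positivity)

theorem lintegral_driftKernelIncrement_le_of_le_two (hH1 : 1 < H) (hH2 : H ≤ 2)
    (hη : IsLeftEndpointMap π η) (ht : 0 ≤ t) (htT : t ≤ T) (hδ : 0 ≤ δ) :
    ∫⁻ s in Ioo 0 t,
        ENNReal.ofReal (driftKernelIncrement H t δ s + driftKernelIncrement H t δ (η s)) ≤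
      ENNReal.ofReal (2 * T ^ (H - 1) * δ) := by
  refine setLIntegral_ofReal_le_of_le_integral measurableSet_Ioo
    (g := fun s => 2 * ((H - 1) * (δ * (t - s) ^ (H - 2))))
    (fun s _ => add_nonneg (abs_nonneg _) (abs_nonneg _)) (fun s hs => ?_)
    ((((integrableOn_sub_rpow (by linarith) ht).const_mul δ).const_mul (H - 1)).const_mul 2) ?_
  · linarith [driftKernelIncrement_add_le_two_mul hH2 hη htT hδ hs,
      driftKernelIncrement_le_of_le_two hH1.le hH2 hδ hs.2]
  · have hmono : t ^ (H - 1) ≤ T ^ (H - 1) := Real.rpow_le_rpow ht htT (by linarith)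
    rw [integral_const_mul, integral_const_mul, integral_const_mul,
      integral_sub_rpow (by linarith) ht, show H - 2 + 1 = H - 1 by ring, sub_self,
      Real.zero_rpow (by linarith), sub_zero, mul_left_comm (H - 1),
      mul_div_cancel₀ _ (by linarith)]
    nlinarith

theorem lintegral_driftKernelIncrement_le_of_two_le (hH : 2 ≤ H) (hη : IsLeftEndpointMap π η)
    (ht : 0 ≤ t) (hδ : 0 ≤ δ) (htT : t + δ ≤ T) :
    ∫⁻ s in Ioo 0 t,
        ENNReal.ofReal (driftKernelIncrement H t δ s + driftKernelIncrement H t δ (η s)) ≤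
      ENNReal.ofReal (2 * (H - 1) * T ^ (H - 1) * δ) := by
  have hc : 0 ≤ (H - 1) * (δ * T ^ (H - 2)) :=
    mul_nonneg (by linarith) (mul_nonneg hδ (Real.rpow_nonneg (by linarith) _))
  refine setLIntegral_ofReal_le_of_le_integral measurableSet_Ioo
    (g := fun _ => 2 * ((H - 1) * (δ * T ^ (H - 2))))
    (fun s _ => add_nonneg (abs_nonneg _) (abs_nonneg _)) (fun s hs => ?_)
    (integrableOn_const measure_Ioo_lt_top.ne) ?_
  · have hηs := hη.mem_Icc hs.1.le (by linarith [hs.2])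
    linarith [driftKernelIncrement_le_of_two_le hH hδ hs.1.le hs.2 htT,
      driftKernelIncrement_le_of_two_le hH hδ hηs.1 (hηs.2.trans_lt hs.2) htT]
  · rw [setIntegral_const, Real.volume_real_Ioo_of_le ht, sub_zero, smul_eq_mul,
      show H - 1 = H - 2 + 1 by ring, Real.rpow_add' (by linarith) (by linarith), Real.rpow_one]
    nlinarith

end DriftKernel

/-- Condition (A3) for the fractional drift kernel `(t,s) ↦ (t-s)^{H-1}`
(part of Example 2.2 of the paper): for every `H > 0`, `T > 0` there is `C > 0`
(depending only on `H`, `T`) such that for every partition of `[0,T]` with left-endpoint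
map `η`, every `t ∈ [0,T]` and every `δ ∈ (0, min(t/2, T-t))`,
`∫_0^t [|(t+δ-s)^{H-1} - (t-s)^{H-1}| + |(t+δ-η(s))^{H-1} - (t-η(s))^{H-1}|] ds
  ≤ C δ^{min(H,1)}`. -/
theorem fractional_drift_kernel_A3 (H T : ℝ) (hH : 0 < H) (hT : 0 < T) :
    ∃ C : ℝ, 0 < C ∧
      ∀ (π : TimePartition T) (η : ℝ → ℝ), IsLeftEndpointMap π η →
      ∀ t δ : ℝ, t ∈ Icc (0 : ℝ) T → 0 < δ → δ < min (t / 2) (T - t) →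
        (∫⁻ s in Ioo (0 : ℝ) t,
            ENNReal.ofReal (|(t + δ - s) ^ (H - 1) - (t - s) ^ (H - 1)| +
              |(t + δ - η s) ^ (H - 1) - (t - η s) ^ (H - 1)|)) ≤
          ENNReal.ofReal (C * δ ^ min H 1) := by
  rcases le_or_gt H 1 with hH1 | hH1
  · refine ⟨2 / H, by positivity, fun π η hη t δ ht hδ _ => ?_⟩
    rw [min_eq_left hH1]
    exact lintegral_driftKernelIncrement_le_of_le_one hH hH1 hη ht.1 ht.2 hδ.le
  rw [min_eq_right hH1.le]
  simp only [Real.rpow_one]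
  rcases le_or_gt H 2 with hH2 | hH2
  · exact ⟨2 * T ^ (H - 1), by positivity, fun π η hη t δ ht hδ _ =>
      lintegral_driftKernelIncrement_le_of_le_two hH1 hH2 hη ht.1 ht.2 hδ.le⟩
  · refine ⟨2 * (H - 1) * T ^ (H - 1), by have := sub_pos.2 hH1; positivity,
      fun π η hη t δ ht hδ hδt => ?_⟩
    exact lintegral_driftKernelIncrement_le_of_two_le hH2.le hη ht.1 hδ.le
      (by linarith [hδt.trans_le (min_le_right _ _)])
end

section
/- Condition (A5) for fractional kernels (the verification in the paper's Remark 2.5): Let T > 0, α₁ ∈ (1/2, ∞), α₂ ∈ (0, ∞), and set α' := min(α₁, 2α₂, α₁ + α₂ − 1/2)/2. Then there exists a constant C > 0, depending only on α₁, α₂ and T, such that for all 0 ≤ r ≤ r' ≤ t ≤ T one has ∫_r^{r'} (t−s)^{α₁−1} (s−r)^{α₂−1/2} ds ≤ C (r'−r)^{min(2α',1)}. -/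
/-!
Write `δ = r' - r`. Since `0 < r' - s ≤ t - s ≤ T` on `(r, r')`, the factor `(t - s) ^ (α₁ - 1)` is
at most `T ^ (α₁ - 1) + (r' - s) ^ (α₁ - 1)`, whatever the sign of `α₁ - 1`. The first part
integrates to a multiple of `δ ^ (α₂ + 1/2)`. The second is a Beta integral, at most a multiple of
`δ ^ (α₁ + α₂ - 1/2)`: on each half of `(r, r')` one of the two factors is comparable to a power of
`δ`, and the other integrates exactly. Both exponents are at least `min (2α') 1`, and `δ ≤ T`.
-/

open MeasureTheory Set

lemma rpow_le_rpow_add_rpow_of_mem_Icc {a b x : ℝ} (p : ℝ) (ha : 0 < a) (hx : x ∈ Icc a b) :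
    x ^ p ≤ a ^ p + b ^ p := by
  rcases le_total 0 p with hp | hp
  · have := Real.rpow_le_rpow (ha.trans_le hx.1).le hx.2 hp
    have := Real.rpow_nonneg ha.le p
    linarith
  · have := Real.rpow_le_rpow_of_nonpos ha hx.1 hp
    have := Real.rpow_nonneg (ha.le.trans (hx.1.trans hx.2)) p
    linarith

lemma rpow_le_of_mem_Icc_half {c x : ℝ} (p : ℝ) (hc : 0 < c) (hx : x ∈ Icc (c / 2) c) :
    x ^ p ≤ (2 ^ (-p) + 1) * c ^ p := by
  have h := rpow_le_rpow_add_rpow_of_mem_Icc p (half_pos hc) hx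
  rwa [Real.div_rpow hc.le zero_le_two, div_eq_inv_mul, ← Real.rpow_neg zero_le_two,
    ← add_one_mul] at h

lemma rpow_le_rpow_sub_mul_rpow {δ T e p : ℝ} (hδ : 0 ≤ δ) (hδT : δ ≤ T) (hp : p ≠ 0)
    (hep : e ≤ p) : δ ^ p ≤ T ^ (p - e) * δ ^ e := by
  calc δ ^ p = δ ^ (p - e) * δ ^ e := by
        rw [← Real.rpow_add' hδ (by simpa using hp), sub_add_cancel]
    _ ≤ T ^ (p - e) * δ ^ e := by gcongr

lemma setLIntegral_ofReal_mul_le {α : Type*} [MeasurableSpace α] {μ : Measure α} {s : Set α}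
    (hs : MeasurableSet s) {f g : α → ℝ} {K : ℝ} (hf : ∀ x ∈ s, f x ≤ K) (hg : ∀ x ∈ s, 0 ≤ g x) :
    ∫⁻ x in s, ENNReal.ofReal (f x * g x) ∂μ ≤
      ENNReal.ofReal K * ∫⁻ x in s, ENNReal.ofReal (g x) ∂μ := by
  rw [← lintegral_const_mul' _ _ ENNReal.ofReal_ne_top]
  refine setLIntegral_mono' hs fun x hx => ?_
  rw [← ENNReal.ofReal_mul' (hg x hx)]
  exact ENNReal.ofReal_le_ofReal (mul_le_mul_of_nonneg_right (hf x hx) (hg x hx))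

lemma lintegral_Ioc_rpow_comp_sub_right {a b c : ℝ} (hab : a ≤ b) (hc : -1 < c) :
    ∫⁻ s in Ioc a b, ENNReal.ofReal ((s - a) ^ c) =
      ENNReal.ofReal ((b - a) ^ (c + 1) / (c + 1)) := by
  have hint : IntervalIntegrable (fun s => (s - a) ^ c) volume a b := by
    simpa using
      (intervalIntegral.intervalIntegrable_rpow' (a := a - a) (b := b - a) hc).comp_sub_right a
  rw [← ofReal_integral_eq_lintegral_ofReal hint.1 (ae_restrict_of_forall_mem measurableSet_Ioc
    fun s hs => Real.rpow_nonneg (sub_nonneg.2 hs.1.le) c), ← intervalIntegral.integral_of_le hab,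
    intervalIntegral.integral_comp_sub_right (· ^ c), integral_rpow (Or.inl hc), sub_self,
    Real.zero_rpow (by linarith), sub_zero]

lemma lintegral_Ioc_rpow_comp_sub_left {a b c : ℝ} (hab : a ≤ b) (hc : -1 < c) :
    ∫⁻ s in Ioc a b, ENNReal.ofReal ((b - s) ^ c) =
      ENNReal.ofReal ((b - a) ^ (c + 1) / (c + 1)) := by
  have hint : IntervalIntegrable (fun s => (b - s) ^ c) volume a b := by
    have h := (intervalIntegral.intervalIntegrable_rpow' (a := b - b) (b := b - a) hc).comp_sub_left b
    simpa using h.symm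
  rw [← ofReal_integral_eq_lintegral_ofReal hint.1 (ae_restrict_of_forall_mem measurableSet_Ioc
    fun s hs => Real.rpow_nonneg (sub_nonneg.2 hs.2) c), ← intervalIntegral.integral_of_le hab,
    intervalIntegral.integral_comp_sub_left (· ^ c), integral_rpow (Or.inl hc), sub_self,
    Real.zero_rpow (by linarith), sub_zero]

lemma lintegral_Ioc_rpow_mul_rpow_le {a b α β : ℝ} (hab : a ≤ b) (hα : -1 < α) (hβ : -1 < β) :
    ∫⁻ s in Ioc a b, ENNReal.ofReal ((b - s) ^ α * (s - a) ^ β) ≤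
      ENNReal.ofReal (((2 ^ (-α) + 1) / (β + 1) + (2 ^ (-β) + 1) / (α + 1)) *
        (b - a) ^ (α + β + 1)) := by
  rcases hab.eq_or_lt with rfl | hab
  · simp
  set δ := b - a
  have hδpos : 0 < δ := sub_pos.2 hab
  set m := (a + b) / 2 with hm
  have hleft : ∫⁻ s in Ioc a m, ENNReal.ofReal ((b - s) ^ α * (s - a) ^ β) ≤
      ENNReal.ofReal ((2 ^ (-α) + 1) * δ ^ α) * ENNReal.ofReal (δ ^ (β + 1) / (β + 1)) := by
    rw [← lintegral_Ioc_rpow_comp_sub_right hab.le hβ]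
    refine (setLIntegral_ofReal_mul_le measurableSet_Ioc (fun s hs => ?_) fun s hs => ?_).trans
      (mul_le_mul_right (lintegral_mono_set (Ioc_subset_Ioc_right (by linarith))) _)
    · exact rpow_le_of_mem_Icc_half α hδpos ⟨by linarith [hs.2], by linarith [hs.1]⟩
    · exact Real.rpow_nonneg (by linarith [hs.1]) β
  have hright : ∫⁻ s in Ioc m b, ENNReal.ofReal ((b - s) ^ α * (s - a) ^ β) ≤
      ENNReal.ofReal ((2 ^ (-β) + 1) * δ ^ β) * ENNReal.ofReal (δ ^ (α + 1) / (α + 1)) := by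
    rw [← lintegral_Ioc_rpow_comp_sub_left hab.le hα]
    simp_rw [mul_comm ((b - _) ^ α)]
    refine (setLIntegral_ofReal_mul_le measurableSet_Ioc (fun s hs => ?_) fun s hs => ?_).trans
      (mul_le_mul_right (lintegral_mono_set (Ioc_subset_Ioc_left (by linarith))) _)
    · exact rpow_le_of_mem_Icc_half β hδpos ⟨by linarith [hs.1], by linarith [hs.2]⟩
    · exact Real.rpow_nonneg (by linarith [hs.2]) α
  rw [← Ioc_union_Ioc_eq_Ioc (by linarith : a ≤ m) (by linarith : m ≤ b)]
  refine (lintegral_union_le _ _ _).trans ((add_le_add hleft hright).trans_eq ?_)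
  have hα' : 0 < α + 1 := by linarith
  have hβ' : 0 < β + 1 := by linarith
  rw [← ENNReal.ofReal_mul (by positivity), ← ENNReal.ofReal_mul (by positivity),
    ← ENNReal.ofReal_add (by positivity) (by positivity)]
  congr 1
  rw [Real.rpow_add hδpos, Real.rpow_add hδpos, Real.rpow_add hδpos, Real.rpow_add hδpos]
  field_simp

lemma lintegral_Ioo_fractional_kernel_le {r r' t T α β : ℝ} (hr : 0 ≤ r) (hrr' : r ≤ r')
    (hr't : r' ≤ t) (htT : t ≤ T) (hα : -1 < α) (hβ : -1 < β) :
    ∫⁻ s in Ioo r r', ENNReal.ofReal ((t - s) ^ α * (s - r) ^ β) ≤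
      ENNReal.ofReal (T ^ α / (β + 1) * (r' - r) ^ (β + 1) +
        ((2 ^ (-α) + 1) / (β + 1) + (2 ^ (-β) + 1) / (α + 1)) * (r' - r) ^ (α + β + 1)) := by
  have hα' : 0 < α + 1 := by linarith
  have hβ' : 0 < β + 1 := by linarith
  have hTα : 0 ≤ T ^ α := Real.rpow_nonneg (by linarith) α
  calc ∫⁻ s in Ioo r r', ENNReal.ofReal ((t - s) ^ α * (s - r) ^ β)
      ≤ ∫⁻ s in Ioo r r', ENNReal.ofReal (T ^ α * (s - r) ^ β) +
          ENNReal.ofReal ((r' - s) ^ α * (s - r) ^ β) := by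
        refine setLIntegral_mono' measurableSet_Ioo fun s hs => ?_
        have hsr : 0 ≤ (s - r) ^ β := Real.rpow_nonneg (by linarith [hs.1]) β
        rw [← ENNReal.ofReal_add (mul_nonneg hTα hsr)
          (mul_nonneg (Real.rpow_nonneg (by linarith [hs.2]) α) hsr), ← add_mul, add_comm]
        gcongr
        exact rpow_le_rpow_add_rpow_of_mem_Icc α (by linarith [hs.2])
          ⟨by linarith, by linarith [hs.1]⟩
    _ ≤ ∫⁻ s in Ioc r r', ENNReal.ofReal (T ^ α * (s - r) ^ β) +
          ENNReal.ofReal ((r' - s) ^ α * (s - r) ^ β) := lintegral_mono_set Ioo_subset_Ioc_self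
    _ = ENNReal.ofReal (T ^ α) * ENNReal.ofReal ((r' - r) ^ (β + 1) / (β + 1)) +
          ∫⁻ s in Ioc r r', ENNReal.ofReal ((r' - s) ^ α * (s - r) ^ β) := by
        simp_rw [ENNReal.ofReal_mul hTα]
        rw [lintegral_add_left (by fun_prop), lintegral_const_mul' _ _ ENNReal.ofReal_ne_top,
          lintegral_Ioc_rpow_comp_sub_right hrr' hβ]
    _ ≤ ENNReal.ofReal (T ^ α) * ENNReal.ofReal ((r' - r) ^ (β + 1) / (β + 1)) +
          ENNReal.ofReal (((2 ^ (-α) + 1) / (β + 1) + (2 ^ (-β) + 1) / (α + 1)) *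
            (r' - r) ^ (α + β + 1)) := by
        gcongr
        exact lintegral_Ioc_rpow_mul_rpow_le hrr' hα hβ
    _ = _ := by
        have hδ : 0 ≤ r' - r := sub_nonneg.2 hrr'
        rw [← ENNReal.ofReal_mul hTα, ← ENNReal.ofReal_add
          (mul_nonneg hTα (div_nonneg (Real.rpow_nonneg hδ _) hβ'.le))
          (mul_nonneg (add_nonneg (div_nonneg (by positivity) hβ'.le)
            (div_nonneg (by positivity) hα'.le)) (Real.rpow_nonneg hδ _))]
        congr 1
        ring

/-- Condition (A5) for fractional kernels (the verification in Remark 2.5 of the paper):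
for `T > 0`, `α₁ ∈ (1/2, ∞)`, `α₂ ∈ (0, ∞)` and
`α' := min(α₁, 2α₂, α₁ + α₂ - 1/2)/2`, there is a constant `C > 0` (depending only on
`α₁`, `α₂`, `T`) such that for all `0 ≤ r ≤ r' ≤ t ≤ T`,
`∫_r^{r'} (t-s)^{α₁-1} (s-r)^{α₂-1/2} ds ≤ C (r'-r)^{min(2α',1)}`. -/
theorem fractional_kernel_A5 (T α₁ α₂ : ℝ) (hT : 0 < T) (hα₁ : 1/2 < α₁) (hα₂ : 0 < α₂) :
    ∃ C : ℝ, 0 < C ∧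
      ∀ r r' t : ℝ, 0 ≤ r → r ≤ r' → r' ≤ t → t ≤ T →
        (∫⁻ s in Ioo r r',
            ENNReal.ofReal ((t - s) ^ (α₁ - 1) * (s - r) ^ (α₂ - 1/2))) ≤
          ENNReal.ofReal
            (C * (r' - r) ^
              min (2 * (min α₁ (min (2 * α₂) (α₁ + α₂ - 1/2)) / 2)) 1) := by
  set e := min (2 * (min α₁ (min (2 * α₂) (α₁ + α₂ - 1/2)) / 2)) 1
  have he₁ : e ≤ α₂ - 1/2 + 1 := by grind
  have he₂ : e ≤ α₁ - 1 + (α₂ - 1/2) + 1 := by grind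
  set A := T ^ (α₁ - 1) / (α₂ - 1/2 + 1)
  set K := (2 ^ (-(α₁ - 1)) + 1) / (α₂ - 1/2 + 1) + (2 ^ (-(α₂ - 1/2)) + 1) / (α₁ - 1 + 1)
  have hA : 0 ≤ A := div_nonneg (Real.rpow_nonneg hT.le _) (by linarith)
  have hK : 0 < K :=
    add_pos (div_pos (by positivity) (by linarith)) (div_pos (by positivity) (by linarith))
  refine ⟨A * T ^ (α₂ - 1/2 + 1 - e) + K * T ^ (α₁ - 1 + (α₂ - 1/2) + 1 - e),
    add_pos_of_nonneg_of_pos (by positivity) (by positivity), fun r r' t hr hrr' hr't htT => ?_⟩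
  refine (lintegral_Ioo_fractional_kernel_le hr hrr' hr't htT (by linarith) (by linarith)).trans
    (ENNReal.ofReal_le_ofReal ?_)
  have hδ : 0 ≤ r' - r := sub_nonneg.2 hrr'
  have hδT : r' - r ≤ T := by linarith
  calc A * (r' - r) ^ (α₂ - 1/2 + 1) + K * (r' - r) ^ (α₁ - 1 + (α₂ - 1/2) + 1)
      ≤ A * (T ^ (α₂ - 1/2 + 1 - e) * (r' - r) ^ e) +
          K * (T ^ (α₁ - 1 + (α₂ - 1/2) + 1 - e) * (r' - r) ^ e) := by
        gcongr
        · exact rpow_le_rpow_sub_mul_rpow hδ hδT (by linarith) he₁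
        · exact rpow_le_rpow_sub_mul_rpow hδ hδT (by linarith) he₂
    _ = _ := by ring
end

section
/- Abstract uniform-norm convergence rate (the analytical core of the paper's Theorems 2.3(ii) and 2.6(ii)): Let T > 0, a ∈ (0,1], p > 1/a, ε ∈ (1/p, a), K ≥ 0 and δ ∈ (0,1]. Let X and Z be continuous ℝ^d-valued stochastic processes on [0,T] on a common probability space such that for all s, t ∈ [0,T]: E[|X_t − X_s|^p] ≤ K |t−s|^{ap}, E[|Z_t − Z_s|^p] ≤ K |t−s|^{ap}, and E[|X_t − Z_t|^p] ≤ K δ^{ap}. Then there exists a constant C > 0, depending only on d, p, a, ε and T (in particular not on X, Z, K or δ), such that ( E[ sup_{t∈[0,T]} |X_t − Z_t|^p ] )^{1/p} ≤ C K^{1/p} δ^{a−ε}. -/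
/-!
Chaining along the dyadic points of `[0, T]`. For `D = X - Z` and any level `N`, every `t` is the
limit of the dyadic points just below it, and consecutive ones differ by one increment of the next
level, so `sup_t |D_t|` is at most the maximum of `|D|` over the `2^N + 1` points of level `N` plus
the sum over `n > N` of the maximal increment of level `n`. A maximum of `m` random variables has
`L^p` norm at most `m^(1/p)` times the largest of their `L^p` norms, so by Minkowski's inequality
the first term costs `(2^N + 1)^(1/p) K^(1/p) δ^a` and level `n` costs
`2 K^(1/p) T^a 2^(n(1/p - a))`, a geometric series since `a > 1/p`. Taking `2^(-N) ≈ δ` gives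
`K^(1/p) δ^(a - 1/p)`, and `δ^(a - 1/p) ≤ δ^(a - ε)`.
-/

open MeasureTheory Set Filter Topology
open scoped ENNReal

section Moments

theorem ENNReal.iSup_rpow {ι : Sort*} (x : ι → ℝ≥0∞) {r : ℝ} (hr : 0 < r) :
    (⨆ i, x i) ^ r = ⨆ i, x i ^ r :=
  (ENNReal.orderIsoRpow r hr).map_iSup x

variable {Ω : Type*} [MeasurableSpace Ω] {μ : Measure Ω}

theorem eLpNorm'_biSup_le {ι : Type*} (s : Finset ι) {Y : ι → Ω → ℝ≥0∞}
    (hY : ∀ i ∈ s, AEMeasurable (Y i) μ) {q : ℝ} (hq : 0 < q) {b : ℝ≥0∞}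
    (hb : ∀ i ∈ s, eLpNorm' (Y i) q μ ≤ b) :
    eLpNorm' (fun ω => ⨆ i ∈ s, Y i ω) q μ ≤ (s.card : ℝ≥0∞) ^ (1 / q) * b := by
  have hpow (ω : Ω) : (⨆ i ∈ s, Y i ω) ^ q ≤ ∑ i ∈ s, Y i ω ^ q := by
    simp only [ENNReal.iSup_rpow _ hq]
    exact iSup₂_le fun i hi =>
      Finset.single_le_sum (f := fun i => Y i ω ^ q) (fun _ _ => zero_le) hi
  have hint : ∀ i ∈ s, ∫⁻ ω, Y i ω ^ q ∂μ ≤ b ^ q := fun i hi => by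
    have := ENNReal.rpow_le_rpow (hb i hi) hq.le
    rwa [eLpNorm'_eq_lintegral_enorm, ← ENNReal.rpow_mul, one_div_mul_cancel hq.ne',
      ENNReal.rpow_one] at this
  calc eLpNorm' (fun ω => ⨆ i ∈ s, Y i ω) q μ ≤ (∑ i ∈ s, ∫⁻ ω, Y i ω ^ q ∂μ) ^ (1 / q) := by
        rw [eLpNorm'_eq_lintegral_enorm, ← lintegral_finsetSum' s fun i hi => (hY i hi).pow_const q]
        gcongr with ω
        exact hpow ω
    _ ≤ (s.card * b ^ q) ^ (1 / q) := by
        gcongr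
        simpa using Finset.sum_le_card_nsmul s _ _ hint
    _ = (s.card : ℝ≥0∞) ^ (1 / q) * b := by
        rw [ENNReal.mul_rpow_of_nonneg _ _ (by positivity), ← ENNReal.rpow_mul,
          mul_one_div_cancel hq.ne', ENNReal.rpow_one]

theorem eLpNorm'_iSup_of_monotone {S : ℕ → Ω → ℝ≥0∞} (hS : ∀ n, AEMeasurable (S n) μ)
    (hmono : ∀ ω, Monotone fun n => S n ω) {q : ℝ} (hq : 0 < q) :
    eLpNorm' (fun ω => ⨆ n, S n ω) q μ = ⨆ n, eLpNorm' (S n) q μ := by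
  simp only [eLpNorm'_eq_lintegral_enorm, enorm_eq_self, ENNReal.iSup_rpow _ hq]
  rw [lintegral_iSup' (fun n => (hS n).pow_const q)
    (ae_of_all _ fun ω m n hmn => ENNReal.rpow_le_rpow (hmono ω hmn) hq.le),
    ENNReal.iSup_rpow _ (one_div_pos.2 hq)]

theorem eLpNorm'_tsum_le {Y : ℕ → Ω → ℝ≥0∞} (hY : ∀ n, AEMeasurable (Y n) μ) {q : ℝ}
    (hq : 1 ≤ q) : eLpNorm' (fun ω => ∑' n, Y n ω) q μ ≤ ∑' n, eLpNorm' (Y n) q μ := by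
  simp only [ENNReal.tsum_eq_iSup_nat]
  rw [eLpNorm'_iSup_of_monotone (fun m => Finset.aemeasurable_fun_sum _ fun n _ => hY n)
    (fun ω => monotone_nat_of_le_succ fun m => by simp [Finset.sum_range_succ])
    (zero_lt_one.trans_le hq)]
  refine iSup_mono fun m => ?_
  have := eLpNorm'_sum_le (s := Finset.range m) (μ := μ) (fun n _ => (hY n).aestronglyMeasurable) hq
  simpa only [Finset.sum_fn] using this

variable {E : Type*} [NormedAddCommGroup E]

theorem eLpNorm'_le_ofReal_of_lintegral_le {Y : Ω → E} {p a K c : ℝ} (hp : 0 < p) (hK : 0 ≤ K)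
    (hc : 0 ≤ c) (h : ∫⁻ ω, ENNReal.ofReal (‖Y ω‖ ^ p) ∂μ ≤ ENNReal.ofReal (K * c ^ (a * p))) :
    eLpNorm' Y p μ ≤ ENNReal.ofReal (K ^ (1 / p) * c ^ a) := by
  have hKc : (K * c ^ (a * p)) ^ (1 / p) = K ^ (1 / p) * c ^ a := by
    rw [Real.mul_rpow hK (by positivity), ← Real.rpow_mul hc,
      show a * p * (1 / p) = a by field_simp]
  simp only [eLpNorm'_eq_lintegral_enorm, ← ofReal_norm,
    ENNReal.ofReal_rpow_of_nonneg (norm_nonneg _) hp.le]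
  rw [← hKc, ← ENNReal.ofReal_rpow_of_nonneg (by positivity) (by positivity)]
  gcongr

theorem eLpNorm'_biSup_enorm_eq {ι : Type*} (S : Set ι) (g : Ω → ι → E) {p : ℝ} (hp : 0 < p) :
    eLpNorm' (fun ω => ⨆ t ∈ S, ‖g ω t‖ₑ) p μ =
      (∫⁻ ω, ⨆ t ∈ S, ENNReal.ofReal (‖g ω t‖ ^ p) ∂μ) ^ (1 / p) := by
  simp only [eLpNorm'_eq_lintegral_enorm, enorm_eq_self, ENNReal.iSup_rpow _ hp, ← ofReal_norm,
    ENNReal.ofReal_rpow_of_nonneg (norm_nonneg _) hp.le]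

theorem eLpNorm'_sub_sub_le {X Z X' Z' : Ω → E}
    (hX : AEStronglyMeasurable (X - X') μ) (hZ : AEStronglyMeasurable (Z - Z') μ) {q : ℝ}
    (hq : 1 ≤ q) :
    eLpNorm' (X - Z - (X' - Z')) q μ ≤ eLpNorm' (X - X') q μ + eLpNorm' (Z - Z') q μ := by
  rw [show X - Z - (X' - Z') = X - X' + -(Z - Z') by abel, ← eLpNorm'_neg (Z - Z')]
  exact eLpNorm'_add_le hX hZ.neg hq

end Moments

section RealBounds

variable {p a δ : ℝ} {N : ℕ}

theorem two_pow_add_one_rpow_mul_rpow_le (hp : 0 < p) (hδ : δ ∈ Ioc 0 1)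
    (hN : (2 : ℝ) ^ N ≤ 1 / δ) :
    ((2 : ℝ) ^ N + 1) ^ (1 / p) * δ ^ a ≤ 2 ^ (1 / p) * δ ^ (a - 1 / p) := by
  have hgrid : (2 : ℝ) ^ N + 1 ≤ 2 / δ := by
    have := one_le_one_div hδ.1 hδ.2
    rw [show 2 / δ = 1 / δ + 1 / δ by ring]
    linarith
  have hδa : 0 ≤ δ ^ a := Real.rpow_nonneg hδ.1.le a
  calc ((2 : ℝ) ^ N + 1) ^ (1 / p) * δ ^ a ≤ (2 / δ) ^ (1 / p) * δ ^ a := by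
        gcongr
    _ = 2 ^ (1 / p) * δ ^ (a - 1 / p) := by
        rw [Real.div_rpow zero_le_two hδ.1.le, Real.rpow_sub hδ.1]
        ring

theorem two_rpow_pow_succ_le (hpa : 1 / p < a) (hδ : 0 < δ) (hN : 1 / δ < 2 ^ (N + 1)) :
    ((2 : ℝ) ^ (1 / p - a)) ^ (N + 1) ≤ δ ^ (a - 1 / p) := by
  have hmesh : ((2 : ℝ) ^ (N + 1))⁻¹ ≤ δ := by
    rw [one_div] at hN
    simpa using inv_anti₀ (inv_pos.2 hδ) hN.le
  calc ((2 : ℝ) ^ (1 / p - a)) ^ (N + 1) = (((2 : ℝ) ^ (N + 1))⁻¹) ^ (a - 1 / p) := by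
        rw [Real.rpow_pow_comm zero_le_two, Real.inv_rpow (by positivity),
          ← Real.rpow_neg (by positivity), neg_sub]
    _ ≤ δ ^ (a - 1 / p) := Real.rpow_le_rpow (by positivity) hmesh (by linarith)

theorem two_pow_rpow_mul_div_two_pow_rpow {T : ℝ} (hT : 0 ≤ T) (n : ℕ) :
    ((2 : ℝ) ^ n) ^ (1 / p) * (T / 2 ^ n) ^ a = T ^ a * ((2 : ℝ) ^ (1 / p - a)) ^ n := by
  rw [Real.div_rpow hT (by positivity), ← Real.rpow_natCast, ← Real.rpow_natCast (2 ^ _),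
    ← Real.rpow_mul zero_le_two, ← Real.rpow_mul zero_le_two, ← Real.rpow_mul zero_le_two,
    mul_div_left_comm, ← Real.rpow_sub zero_lt_two, mul_comm (1 / p - a), mul_sub]

theorem chaining_bound_le_rate {ε T K : ℝ} (hp : 0 < p) (hε : ε ∈ Ioo (1 / p) a)
    (hδ : δ ∈ Ioc 0 1) (hT : 0 ≤ T) (hK : 0 ≤ K) (hN : (2 : ℝ) ^ N ≤ 1 / δ)
    (hN' : 1 / δ < 2 ^ (N + 1)) :
    (2 ^ N + 1) ^ (1 / p) * (K ^ (1 / p) * δ ^ a) +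
        2 * K ^ (1 / p) * T ^ a * ((2 : ℝ) ^ (1 / p - a)) ^ (N + 1) / (1 - (2 : ℝ) ^ (1 / p - a)) ≤
      (2 ^ (1 / p) + 2 * T ^ a / (1 - (2 : ℝ) ^ (1 / p - a))) * K ^ (1 / p) * δ ^ (a - ε) := by
  have hpa : 1 / p < a := hε.1.trans hε.2
  have hr : 0 < 1 - (2 : ℝ) ^ (1 / p - a) :=
    sub_pos.2 (Real.rpow_lt_one_of_one_lt_of_neg one_lt_two (by linarith))
  have hKp : 0 ≤ K ^ (1 / p) := Real.rpow_nonneg hK _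
  have hTa : 0 ≤ T ^ a := Real.rpow_nonneg hT _
  have hδε : δ ^ (a - 1 / p) ≤ δ ^ (a - ε) :=
    Real.rpow_le_rpow_of_exponent_ge hδ.1 hδ.2 (by linarith [hε.1])
  calc (2 ^ N + 1) ^ (1 / p) * (K ^ (1 / p) * δ ^ a) +
        2 * K ^ (1 / p) * T ^ a * ((2 : ℝ) ^ (1 / p - a)) ^ (N + 1) / (1 - (2 : ℝ) ^ (1 / p - a))
      = K ^ (1 / p) * ((2 ^ N + 1) ^ (1 / p) * δ ^ a) + 2 * K ^ (1 / p) * T ^ a /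
          (1 - (2 : ℝ) ^ (1 / p - a)) * ((2 : ℝ) ^ (1 / p - a)) ^ (N + 1) := by ring
    _ ≤ K ^ (1 / p) * (2 ^ (1 / p) * δ ^ (a - ε)) + 2 * K ^ (1 / p) * T ^ a /
          (1 - (2 : ℝ) ^ (1 / p - a)) * δ ^ (a - ε) := by
        gcongr K ^ (1 / p) * ?_ + _ * ?_
        · exact (two_pow_add_one_rpow_mul_rpow_le hp hδ hN).trans (by gcongr)
        · exact (two_rpow_pow_succ_le hpa hδ.1 hN').trans hδε
    _ = (2 ^ (1 / p) + 2 * T ^ a / (1 - (2 : ℝ) ^ (1 / p - a))) * K ^ (1 / p) * δ ^ (a - ε) := by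
        ring

end RealBounds

noncomputable section Dyadic

variable {T t : ℝ} {n k : ℕ}

def dyadicPoint (T : ℝ) (n k : ℕ) : ℝ := k * T / 2 ^ n

theorem dyadicPoint_mem_Icc (hT : 0 ≤ T) (hk : k ≤ 2 ^ n) : dyadicPoint T n k ∈ Icc 0 T := by
  refine ⟨by unfold dyadicPoint; positivity, ?_⟩
  rw [dyadicPoint, div_le_iff₀ (by positivity), mul_comm T]
  gcongr
  exact_mod_cast hk

theorem dyadicPoint_succ_sub : dyadicPoint T n (k + 1) - dyadicPoint T n k = T / 2 ^ n := by
  simp only [dyadicPoint]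
  push_cast
  ring

theorem dyadicPoint_succ_two_mul : dyadicPoint T (n + 1) (2 * k) = dyadicPoint T n k := by
  simp only [dyadicPoint]
  push_cast
  field_simp
  ring

def dyadicIndex (T t : ℝ) (n : ℕ) : ℕ := ⌊t / T * 2 ^ n⌋₊

theorem dyadicIndex_succ_div_two : dyadicIndex T t (n + 1) / 2 = dyadicIndex T t n := by
  rw [dyadicIndex, ← Nat.floor_div_natCast, dyadicIndex, pow_succ]
  congr 1
  push_cast
  ring

theorem dyadicIndex_le (hT : 0 < T) (ht : t ≤ T) : dyadicIndex T t n ≤ 2 ^ n := by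
  refine Nat.floor_le_of_le ?_
  push_cast
  calc t / T * 2 ^ n ≤ 1 * 2 ^ n := by gcongr; exact div_le_one_of_le₀ ht hT.le
    _ = 2 ^ n := one_mul _

theorem dyadicPoint_dyadicIndex_mem (hT : 0 < T) (ht : 0 ≤ t) :
    dyadicPoint T n (dyadicIndex T t n) ∈ Ioc (t - T / 2 ^ n) t := by
  have hfloor := Nat.floor_le (a := t / T * 2 ^ n) (by positivity)
  have hlt := Nat.lt_floor_add_one (t / T * 2 ^ n)
  have h2n : (0 : ℝ) < 2 ^ n := by positivity
  simp only [dyadicPoint, dyadicIndex, Set.mem_Ioc]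
  constructor
  · rw [lt_div_iff₀ h2n]
    have := mul_lt_mul_of_pos_right hlt hT
    field_simp at this ⊢
    linarith
  · rw [div_le_iff₀ h2n]
    have := mul_le_mul_of_nonneg_right hfloor hT.le
    field_simp at this ⊢
    linarith

theorem tendsto_dyadicPoint_dyadicIndex (hT : 0 < T) (ht : 0 ≤ t) :
    Tendsto (fun n => dyadicPoint T n (dyadicIndex T t n)) atTop (𝓝 t) := by
  have hmesh : Tendsto (fun n : ℕ => t - T / 2 ^ n) atTop (𝓝 t) := by
    simpa using tendsto_const_nhds.sub
      (tendsto_const_nhds.div_atTop (tendsto_pow_atTop_atTop_of_one_lt (one_lt_two : (1 : ℝ) < 2)))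
  exact tendsto_of_tendsto_of_tendsto_of_le_of_le hmesh tendsto_const_nhds
    (fun n => (dyadicPoint_dyadicIndex_mem (n := n) hT ht).1.le)
    fun n => (dyadicPoint_dyadicIndex_mem hT ht).2

variable {α : Type*} [PseudoEMetricSpace α]

def dyadicOsc (f : ℝ → α) (T : ℝ) (n : ℕ) : ℝ≥0∞ :=
  ⨆ k ∈ Finset.range (2 ^ n), edist (f (dyadicPoint T n k)) (f (dyadicPoint T n (k + 1)))

theorem edist_dyadicPoint_div_two_le_dyadicOsc (f : ℝ → α) {j : ℕ} (hj : j ≤ 2 ^ (n + 1)) :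
    edist (f (dyadicPoint T n (j / 2))) (f (dyadicPoint T (n + 1) j)) ≤ dyadicOsc f T (n + 1) := by
  rw [← dyadicPoint_succ_two_mul]
  rcases Nat.even_or_odd' j with ⟨k, rfl | rfl⟩
  · simp
  · rw [show (2 * k + 1) / 2 = k by omega]
    exact le_iSup₂_of_le (2 * k) (Finset.mem_range.2 (by omega)) le_rfl

theorem exists_edist_dyadicPoint_le_tsum_dyadicOsc {f : ℝ → α} (hT : 0 < T)
    (hf : ContinuousOn f (Icc 0 T)) (ht : t ∈ Icc 0 T) (N : ℕ) :
    ∃ k ≤ 2 ^ N, edist (f (dyadicPoint T N k)) (f t) ≤ ∑' m, dyadicOsc f T (N + 1 + m) := by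
  set u : ℕ → ℝ := fun n => dyadicPoint T n (dyadicIndex T t n)
  have hu_mem (n : ℕ) : u n ∈ Icc 0 T := dyadicPoint_mem_Icc hT.le (dyadicIndex_le hT ht.2)
  have hstep (n : ℕ) : edist (f (u n)) (f (u (n + 1))) ≤ dyadicOsc f T (n + 1) := by
    simpa only [u, dyadicIndex_succ_div_two] using
      edist_dyadicPoint_div_two_le_dyadicOsc f (T := T) (dyadicIndex_le hT ht.2 (n := n + 1))
  have hpartial (m : ℕ) : edist (f (u N)) (f (u (N + m))) ≤ ∑' m, dyadicOsc f T (N + 1 + m) :=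
    calc edist (f (u N)) (f (u (N + m)))
        ≤ ∑ j ∈ Finset.range m, edist (f (u (N + j))) (f (u (N + j + 1))) :=
          edist_le_range_sum_edist (fun j => f (u (N + j))) m
      _ ≤ ∑ j ∈ Finset.range m, dyadicOsc f T (N + 1 + j) :=
          Finset.sum_le_sum fun j _ => by
            rw [show N + 1 + j = N + j + 1 by omega]
            exact hstep (N + j)
      _ ≤ ∑' m, dyadicOsc f T (N + 1 + m) := ENNReal.sum_le_tsum _
  have hlim : Tendsto (fun m => f (u (N + m))) atTop (𝓝 (f t)) :=
    (hf t ht).tendsto.comp <| tendsto_nhdsWithin_iff.2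
      ⟨(tendsto_dyadicPoint_dyadicIndex hT ht.1).comp
          ((tendsto_add_atTop_nat N).congr fun m => Nat.add_comm m N),
        Eventually.of_forall fun m => hu_mem (N + m)⟩
  exact ⟨dyadicIndex T t N, dyadicIndex_le hT ht.2,
    le_of_tendsto (tendsto_const_nhds.edist hlim) (Eventually.of_forall hpartial)⟩

variable {E : Type*} [NormedAddCommGroup E]

def dyadicGridMax (f : ℝ → E) (T : ℝ) (N : ℕ) : ℝ≥0∞ :=
  ⨆ k ∈ Finset.range (2 ^ N + 1), ‖f (dyadicPoint T N k)‖ₑ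

theorem iSup_enorm_le_dyadicGridMax_add_tsum_dyadicOsc {f : ℝ → E} (hT : 0 < T)
    (hf : ContinuousOn f (Icc 0 T)) (N : ℕ) :
    ⨆ t ∈ Icc 0 T, ‖f t‖ₑ ≤ dyadicGridMax f T N + ∑' m, dyadicOsc f T (N + 1 + m) := by
  refine iSup₂_le fun t ht => ?_
  obtain ⟨k, hk, hchain⟩ := exists_edist_dyadicPoint_le_tsum_dyadicOsc hT hf ht N
  calc ‖f t‖ₑ ≤ ‖f (dyadicPoint T N k)‖ₑ + edist (f (dyadicPoint T N k)) (f t) := by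
        rw [add_comm, edist_comm, ← edist_zero_right, ← edist_zero_right]
        exact edist_triangle _ _ _
    _ ≤ dyadicGridMax f T N + ∑' m, dyadicOsc f T (N + 1 + m) :=
        add_le_add (le_iSup₂_of_le k (Finset.mem_range.2 (Nat.lt_succ_of_le hk)) le_rfl) hchain

end Dyadic

section Chaining

variable {Ω E : Type*} [MeasurableSpace Ω] {μ : Measure Ω} [NormedAddCommGroup E]
  {f : Ω → ℝ → E} {T p a A B : ℝ}

theorem eLpNorm'_dyadicOsc_le (hT : 0 < T) (hp : 0 < p)
    (hmeas : ∀ t, AEStronglyMeasurable (fun ω => f ω t) μ)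
    (hincr : ∀ s ∈ Icc 0 T, ∀ t ∈ Icc 0 T,
      eLpNorm' (fun ω => f ω t - f ω s) p μ ≤ ENNReal.ofReal (B * |t - s| ^ a)) (n : ℕ) :
    eLpNorm' (fun ω => dyadicOsc (f ω) T n) p μ ≤
      ENNReal.ofReal (B * T ^ a * ((2 : ℝ) ^ (1 / p - a)) ^ n) := by
  have hmem {k : ℕ} (hk : k ∈ Finset.range (2 ^ n)) :
      dyadicPoint T n k ∈ Icc 0 T ∧ dyadicPoint T n (k + 1) ∈ Icc 0 T :=
    ⟨dyadicPoint_mem_Icc hT.le (Finset.mem_range.1 hk).le,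
      dyadicPoint_mem_Icc hT.le (Finset.mem_range.1 hk)⟩
  simp only [dyadicOsc, edist_eq_enorm_sub]
  refine (eLpNorm'_biSup_le (Finset.range (2 ^ n))
    (Y := fun k ω => ‖f ω (dyadicPoint T n k) - f ω (dyadicPoint T n (k + 1))‖ₑ)
    (b := ENNReal.ofReal (B * (T / 2 ^ n) ^ a)) (fun k _ => ((hmeas _).sub (hmeas _)).enorm) hp
    fun k hk => ?_).trans_eq ?_
  · rw [eLpNorm'_enorm]
    refine (hincr _ (hmem hk).2 _ (hmem hk).1).trans_eq ?_
    rw [abs_sub_comm, dyadicPoint_succ_sub, abs_of_nonneg (by positivity)]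
  · have hreal : B * T ^ a * ((2 : ℝ) ^ (1 / p - a)) ^ n =
        ((2 : ℝ) ^ n) ^ (1 / p) * (B * (T / 2 ^ n) ^ a) := by
      rw [mul_assoc, ← two_pow_rpow_mul_div_two_pow_rpow hT.le]
      ring
    rw [hreal, ENNReal.ofReal_mul (by positivity : (0 : ℝ) ≤ ((2 : ℝ) ^ n) ^ (1 / p)),
      ← ENNReal.ofReal_rpow_of_nonneg (by positivity) (one_div_nonneg.2 hp.le), Finset.card_range]
    norm_num

theorem eLpNorm'_dyadicGridMax_le (hT : 0 < T) (hp : 0 < p)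
    (hmeas : ∀ t, AEStronglyMeasurable (fun ω => f ω t) μ)
    (hbound : ∀ t ∈ Icc 0 T, eLpNorm' (fun ω => f ω t) p μ ≤ ENNReal.ofReal A) (N : ℕ) :
    eLpNorm' (fun ω => dyadicGridMax (f ω) T N) p μ ≤
      ENNReal.ofReal ((2 ^ N + 1) ^ (1 / p) * A) := by
  refine (eLpNorm'_biSup_le _ (b := ENNReal.ofReal A) (fun k _ => (hmeas _).enorm) hp
    fun k hk => ?_).trans_eq ?_
  · rw [eLpNorm'_enorm]
    exact hbound _ (dyadicPoint_mem_Icc hT.le (Nat.lt_succ_iff.1 (Finset.mem_range.1 hk)))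
  · rw [ENNReal.ofReal_mul (by positivity),
      ← ENNReal.ofReal_rpow_of_nonneg (by positivity) (one_div_nonneg.2 hp.le), Finset.card_range]
    norm_num [ENNReal.ofReal_add, ENNReal.ofReal_pow]

theorem eLpNorm'_iSup_enorm_le (hT : 0 < T) (hp : 1 ≤ p) (hpa : 1 / p < a) (hA : 0 ≤ A)
    (hB : 0 ≤ B) (hcont : ∀ ω, ContinuousOn (f ω) (Icc 0 T))
    (hmeas : ∀ t, AEStronglyMeasurable (fun ω => f ω t) μ)
    (hbound : ∀ t ∈ Icc 0 T, eLpNorm' (fun ω => f ω t) p μ ≤ ENNReal.ofReal A)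
    (hincr : ∀ s ∈ Icc 0 T, ∀ t ∈ Icc 0 T,
      eLpNorm' (fun ω => f ω t - f ω s) p μ ≤ ENNReal.ofReal (B * |t - s| ^ a)) (N : ℕ) :
    eLpNorm' (fun ω => ⨆ t ∈ Icc 0 T, ‖f ω t‖ₑ) p μ ≤
      ENNReal.ofReal ((2 ^ N + 1) ^ (1 / p) * A +
        B * T ^ a * ((2 : ℝ) ^ (1 / p - a)) ^ (N + 1) / (1 - (2 : ℝ) ^ (1 / p - a))) := by
  have hp0 : 0 < p := zero_lt_one.trans_le hp
  set r : ℝ := (2 : ℝ) ^ (1 / p - a)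
  have hr0 : 0 ≤ r := by positivity
  have hr1 : r < 1 := Real.rpow_lt_one_of_one_lt_of_neg one_lt_two (by linarith)
  set G : Ω → ℝ≥0∞ := fun ω => dyadicGridMax (f ω) T N
  set O : ℕ → Ω → ℝ≥0∞ := fun m ω => dyadicOsc (f ω) T (N + 1 + m)
  have hG_meas : AEMeasurable G μ :=
    AEMeasurable.iSup fun k => AEMeasurable.iSup fun _ => (hmeas _).enorm
  have hO_meas (m : ℕ) : AEMeasurable (O m) μ := by
    simp only [O, dyadicOsc, edist_eq_enorm_sub]
    exact AEMeasurable.iSup fun k => AEMeasurable.iSup fun _ => ((hmeas _).sub (hmeas _)).enorm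
  -- The supremum over `[0, T]` need not be measurable: it is only bounded above.
  calc eLpNorm' (fun ω => ⨆ t ∈ Icc 0 T, ‖f ω t‖ₑ) p μ
      ≤ eLpNorm' (G + fun ω => ∑' m, O m ω) p μ :=
        eLpNorm'_mono_enorm_ae hp0.le (ae_of_all _ fun ω =>
          iSup_enorm_le_dyadicGridMax_add_tsum_dyadicOsc hT (hcont ω) N)
    _ ≤ eLpNorm' G p μ + ∑' m, eLpNorm' (O m) p μ :=
        (eLpNorm'_add_le hG_meas.aestronglyMeasurable
          (AEMeasurable.tsum hO_meas).aestronglyMeasurable hp).trans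
          (add_le_add le_rfl (eLpNorm'_tsum_le hO_meas hp))
    _ ≤ ENNReal.ofReal ((2 ^ N + 1) ^ (1 / p) * A) +
          ∑' m, ENNReal.ofReal (B * T ^ a * r ^ (N + 1) * r ^ m) := by
        gcongr with m
        · exact eLpNorm'_dyadicGridMax_le hT hp0 hmeas hbound N
        · simpa only [pow_add, ← mul_assoc] using
            eLpNorm'_dyadicOsc_le hT hp0 hmeas hincr (N + 1 + m)
    _ = _ := by
        rw [← ENNReal.ofReal_tsum_of_nonneg (fun m => by positivity)
            ((summable_geometric_of_lt_one hr0 hr1).mul_left _),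
          ← ENNReal.ofReal_add (by positivity) (tsum_nonneg fun m => by positivity),
          tsum_mul_left, tsum_geometric_of_lt_one hr0 hr1, ← div_eq_mul_inv]

end Chaining

/-- Abstract uniform-norm convergence rate (the analytical core of Theorems 2.3(ii)
and 2.6(ii) of the paper): if `E[|X_t - X_s|^p] ≤ K|t-s|^{ap}`,
`E[|Z_t - Z_s|^p] ≤ K|t-s|^{ap}` and `E[|X_t - Z_t|^p] ≤ K δ^{ap}` on `[0,T]`, with
`a ∈ (0,1]`, `p > 1/a`, `ε ∈ (1/p, a)`, `δ ∈ (0,1]`, then there is a constant `C > 0`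
depending only on `d`, `p`, `a`, `ε` and `T` such that
`(E[sup_{t∈[0,T]} |X_t - Z_t|^p])^{1/p} ≤ C K^{1/p} δ^{a-ε}`. -/
theorem uniform_norm_convergence_rate
    (d : ℕ) (T a p ε : ℝ) (hT : 0 < T) (ha : a ∈ Ioc (0 : ℝ) 1)
    (hp : 1 / a < p) (hε : ε ∈ Ioo (1 / p) a) :
    ∃ C : ℝ, 0 < C ∧
      ∀ (Ω : Type) [MeasureSpace Ω], IsProbabilityMeasure (volume : Measure Ω) →
      ∀ (X Z : Ω → ℝ → EuclideanSpace ℝ (Fin d)) (K δ : ℝ),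
        0 ≤ K → δ ∈ Ioc (0 : ℝ) 1 →
        (∀ ω, ContinuousOn (X ω) (Icc 0 T)) →
        (∀ ω, ContinuousOn (Z ω) (Icc 0 T)) →
        (∀ t, Measurable fun ω => X ω t) →
        (∀ t, Measurable fun ω => Z ω t) →
        (∀ s ∈ Icc (0 : ℝ) T, ∀ t ∈ Icc (0 : ℝ) T,
          (∫⁻ ω, ENNReal.ofReal (‖X ω t - X ω s‖ ^ p)) ≤
            ENNReal.ofReal (K * |t - s| ^ (a * p))) →
        (∀ s ∈ Icc (0 : ℝ) T, ∀ t ∈ Icc (0 : ℝ) T,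
          (∫⁻ ω, ENNReal.ofReal (‖Z ω t - Z ω s‖ ^ p)) ≤
            ENNReal.ofReal (K * |t - s| ^ (a * p))) →
        (∀ t ∈ Icc (0 : ℝ) T,
          (∫⁻ ω, ENNReal.ofReal (‖X ω t - Z ω t‖ ^ p)) ≤
            ENNReal.ofReal (K * δ ^ (a * p))) →
        (∫⁻ ω, ⨆ t ∈ Icc (0 : ℝ) T, ENNReal.ofReal (‖X ω t - Z ω t‖ ^ p)) ^ (1 / p) ≤
          ENNReal.ofReal (C * K ^ (1 / p) * δ ^ (a - ε)) := by
  have hp0 : 0 < p := (one_div_pos.2 ha.1).trans hp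
  have hp1 : 1 ≤ p := ((one_le_one_div ha.1 ha.2).trans_lt hp).le
  have hr : 0 < 1 - (2 : ℝ) ^ (1 / p - a) :=
    sub_pos.2 (Real.rpow_lt_one_of_one_lt_of_neg one_lt_two (by linarith [hε.1, hε.2]))
  refine ⟨2 ^ (1 / p) + 2 * T ^ a / (1 - (2 : ℝ) ^ (1 / p - a)), by positivity, ?_⟩
  intro Ω _ _ X Z K δ hK hδ hXc hZc hXm hZm hX hZ hXZ
  obtain ⟨N, hN, hN'⟩ := exists_nat_pow_near (one_le_one_div hδ.1 hδ.2) one_lt_two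
  have hKp : 0 ≤ K ^ (1 / p) := Real.rpow_nonneg hK _
  have hincr : ∀ s ∈ Icc 0 T, ∀ t ∈ Icc 0 T,
      eLpNorm' (fun ω => X ω t - Z ω t - (X ω s - Z ω s)) p volume ≤
        ENNReal.ofReal (2 * K ^ (1 / p) * |t - s| ^ a) := fun s hs t ht => by
    refine (eLpNorm'_sub_sub_le ((hXm t).sub (hXm s)).aestronglyMeasurable
      ((hZm t).sub (hZm s)).aestronglyMeasurable hp1).trans ?_
    rw [two_mul, add_mul, ENNReal.ofReal_add (by positivity) (by positivity)]
    exact add_le_add (eLpNorm'_le_ofReal_of_lintegral_le hp0 hK (abs_nonneg _) (hX s hs t ht))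
      (eLpNorm'_le_ofReal_of_lintegral_le hp0 hK (abs_nonneg _) (hZ s hs t ht))
  rw [← eLpNorm'_biSup_enorm_eq _ _ hp0]
  refine (eLpNorm'_iSup_enorm_le hT hp1 (hε.1.trans hε.2)
    (mul_nonneg hKp (Real.rpow_nonneg hδ.1.le a)) (mul_nonneg zero_le_two hKp)
    (fun ω => (hXc ω).sub (hZc ω)) (fun t => ((hXm t).sub (hZm t)).aestronglyMeasurable)
    (fun t ht => eLpNorm'_le_ofReal_of_lintegral_le hp0 hK hδ.1.le (hXZ t ht)) hincr N).trans
    (ENNReal.ofReal_le_ofReal ?_)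
  exact chaining_bound_le_rate hp0 hε hδ hT.le hK hN hN'
end
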